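/- arXiv:2306.16951 — 6 statements merged into one kernel-verified Lean document; each statement's English description precedes it below -/
import Mathlib

section
/- Let F be the free group on generators x₁, …, xₙ, let R_i be the normal closure of x_i in F for 1 ≤ i ≤ n, and let R₀ be the normal closure of the product x₁x₂⋯xₙ in F. For every proper subset {i₀, …, i_k} ⊊ {0, 1, …, n} with k ≥ 1, the symmetric commutator subgroup [R_{i₀}, …, R_{i_k}]_S equals the intersection R_{i₀} ∩ R_{i₁} ∩ ⋯ ∩ R_{i_k}. -/
/-- The left-normed iterated commutator subgroup
`[N₁, …, N_k] = [[…[[N₁, N₂], N₃]…], N_k]` of a list of subgroups. -/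
def iterComm {G : Type*} [Group G] : List (Subgroup G) → Subgroup G
  | [] => ⊥
  | N :: l => l.foldl (fun A B => ⁅A, B⁆) N

/-- The symmetric commutator subgroup `[N₁, …, N_k]_S`: the subgroup generated by all
left-normed iterated commutator subgroups `[N_{σ(1)}, …, N_{σ(k)}]` over permutations `σ`. -/
def symmComm {G : Type*} [Group G] {k : ℕ} (N : Fin k → Subgroup G) : Subgroup G :=
  ⨆ σ : Equiv.Perm (Fin k), iterComm (List.ofFn fun i => N (σ i))

/-- In the free group on `n` generators `x₁, …, xₙ` (indexed by `Fin n`), `R n 0` is the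
normal closure of the product `x₁x₂⋯xₙ`, and `R n i` for `i ≠ 0` is the normal closure of
the generator `x_i`. -/
def R (n : ℕ) (i : Fin (n + 1)) : Subgroup (FreeGroup (Fin n)) :=
  if h : i = 0 then
    Subgroup.normalClosure {(List.ofFn fun j : Fin n => FreeGroup.of j).prod}
  else
    Subgroup.normalClosure {FreeGroup.of (i.pred h)}

namespace SymmProof

open Subgroup
open scoped commutatorElement

variable {G : Type*} [Group G]

/-! ### Generic lattice/commutator lemmas -/

theorem iSup_normal {ι : Sort*} (S : ι → Subgroup G) (h : ∀ i, (S i).Normal) :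
    (⨆ i, S i).Normal := by
  constructor
  intro u hu g
  refine Subgroup.iSup_induction S (C := fun x => g * x * g⁻¹ ∈ ⨆ i, S i) hu
    (fun i x hx => ?_) ?_ (fun x y hx hy => ?_)
  · exact le_iSup S i ((h i).conj_mem x hx g)
  · show g * 1 * g⁻¹ ∈ ⨆ i, S i
    simpa using (⨆ i, S i).one_mem
  · show g * (x * y) * g⁻¹ ∈ ⨆ i, S i
    have e : g * (x * y) * g⁻¹ = (g * x * g⁻¹) * (g * y * g⁻¹) := by group
    rw [e]; exact mul_mem hx hy

theorem commutator_iSup_le {ι : Sort*} (S : ι → Subgroup G) (K M : Subgroup G) [hM : M.Normal]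
    (h : ∀ i, ⁅S i, K⁆ ≤ M) : ⁅⨆ i, S i, K⁆ ≤ M := by
  rw [Subgroup.commutator_le]
  intro u hu k hk
  refine Subgroup.iSup_induction S (C := fun x => ⁅x, k⁆ ∈ M) hu
    (fun i x hx => h i (Subgroup.commutator_mem_commutator hx hk))
    (by show ⁅(1 : G), k⁆ ∈ M; simpa using M.one_mem)
    (fun x y hx hy => ?_)
  show ⁅x * y, k⁆ ∈ M
  have e : ⁅x * y, k⁆ = x * ⁅y, k⁆ * x⁻¹ * ⁅x, k⁆ := by
    simp only [commutatorElement_def]; group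
  rw [e]; exact mul_mem (hM.conj_mem _ hy x) hx

theorem commutator_commutator_le_rotate {A B C M : Subgroup G} [M.Normal]
    (h1 : ⁅⁅B, C⁆, A⁆ ≤ M) (h2 : ⁅⁅C, A⁆, B⁆ ≤ M) : ⁅⁅A, B⁆, C⁆ ≤ M := by
  have key : ∀ X : Subgroup G, Subgroup.map (QuotientGroup.mk' M) X = ⊥ ↔ X ≤ M := by
    intro X
    rw [Subgroup.map_eq_bot_iff, QuotientGroup.ker_mk']
  rw [← key, Subgroup.map_commutator, Subgroup.map_commutator]
  exact Subgroup.commutator_commutator_eq_bot_of_rotate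
    (by rw [← Subgroup.map_commutator, ← Subgroup.map_commutator, key]; exact h1)
    (by rw [← Subgroup.map_commutator, ← Subgroup.map_commutator, key]; exact h2)

/-- Three subgroups lemma, right-bracketed form. -/
theorem commutator_right_le {A B C M : Subgroup G} [M.Normal]
    (h1 : ⁅⁅A, B⁆, C⁆ ≤ M) (h2 : ⁅⁅A, C⁆, B⁆ ≤ M) : ⁅A, ⁅B, C⁆⁆ ≤ M := by
  rw [Subgroup.commutator_comm]
  refine commutator_commutator_le_rotate ?_ h1
  rwa [Subgroup.commutator_comm C A]

/-- The set of `u` with `u * (ρ u)⁻¹ ∈ T` is a subgroup when `T` is normal. -/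
def Hsub (ρ : G →* G) (T : Subgroup G) (hT : T.Normal) : Subgroup G where
  carrier := {u | u * (ρ u)⁻¹ ∈ T}
  one_mem' := by
    simp only [Set.mem_setOf_eq, map_one, inv_one, mul_one]
    exact T.one_mem
  mul_mem' := by
    intro a b ha hb
    simp only [Set.mem_setOf_eq] at *
    have e : a * b * (ρ (a * b))⁻¹ = a * (b * (ρ b)⁻¹) * a⁻¹ * (a * (ρ a)⁻¹) := by
      rw [map_mul]; group
    rw [e]
    exact mul_mem (hT.conj_mem _ hb a) ha
  inv_mem' := by
    intro a ha
    simp only [Set.mem_setOf_eq] at *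
    have e : a⁻¹ * (ρ a⁻¹)⁻¹ = a⁻¹ * (a * (ρ a)⁻¹)⁻¹ * a := by
      rw [map_inv]; group
    rw [e]
    have := hT.conj_mem _ (inv_mem ha) a⁻¹
    simpa using this

theorem mem_Hsub {ρ : G →* G} {T : Subgroup G} {hT : T.Normal} {u : G} :
    u ∈ Hsub ρ T hT ↔ u * (ρ u)⁻¹ ∈ T := Iff.rfl

/-! ### `iterComm` basics -/

theorem iterComm_nil : iterComm ([] : List (Subgroup G)) = ⊥ := rfl

theorem iterComm_cons (A : Subgroup G) (l : List (Subgroup G)) :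
    iterComm (A :: l) = l.foldl (fun X B => ⁅X, B⁆) A := rfl

theorem iterComm_singleton (A : Subgroup G) : iterComm [A] = A := rfl

theorem iterComm_concat (A B : Subgroup G) (l : List (Subgroup G)) :
    iterComm (A :: (l ++ [B])) = ⁅iterComm (A :: l), B⁆ := by
  simp [iterComm_cons, List.foldl_append]

theorem foldl_comm_normal :
    ∀ (l : List (Subgroup G)) (A : Subgroup G), A.Normal → (∀ B ∈ l, B.Normal) →
      (l.foldl (fun X B => ⁅X, B⁆) A).Normal := by
  intro l
  induction l with
  | nil => intro A hA _; exact hA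
  | cons C t ih =>
    intro A hA hl
    have hC : C.Normal := hl C List.mem_cons_self
    haveI := hA; haveI := hC
    exact ih ⁅A, C⁆ (Subgroup.commutator_normal A C) (fun B hB => hl B (List.mem_cons_of_mem _ hB))

theorem foldl_comm_le_head :
    ∀ (l : List (Subgroup G)) (A : Subgroup G), A.Normal → (∀ B ∈ l, B.Normal) →
      l.foldl (fun X B => ⁅X, B⁆) A ≤ A := by
  intro l
  induction l with
  | nil => intro A _ _; exact le_rfl
  | cons C t ih =>
    intro A hA hl
    have hC : C.Normal := hl C List.mem_cons_self
    haveI := hA; haveI := hC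
    exact le_trans (ih ⁅A, C⁆ (Subgroup.commutator_normal A C)
      (fun B hB => hl B (List.mem_cons_of_mem _ hB))) (Subgroup.commutator_le_left A C)

theorem foldl_comm_le_mem :
    ∀ (l : List (Subgroup G)) (A : Subgroup G), A.Normal → (∀ B ∈ l, B.Normal) →
      ∀ B ∈ l, l.foldl (fun X B => ⁅X, B⁆) A ≤ B := by
  intro l
  induction l with
  | nil => intro A _ _ B hB; exact absurd hB List.not_mem_nil
  | cons C t ih =>
    intro A hA hl B hB
    have hC : C.Normal := hl C List.mem_cons_self
    haveI := hA; haveI := hC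
    have hrec := fun B hB => hl B (List.mem_cons_of_mem C hB)
    rcases List.mem_cons.mp hB with rfl | hB'
    · exact le_trans (foldl_comm_le_head t ⁅A, B⁆ (Subgroup.commutator_normal A B) hrec)
        (Subgroup.commutator_le_right A B)
    · exact ih ⁅A, C⁆ (Subgroup.commutator_normal A C) hrec B hB'

theorem iterComm_normal (L : List (Subgroup G)) (h : ∀ B ∈ L, B.Normal) :
    (iterComm L).Normal := by
  cases L with
  | nil => rw [iterComm_nil]; infer_instance
  | cons A l =>
    exact foldl_comm_normal l A (h A List.mem_cons_self)
      (fun B hB => h B (List.mem_cons_of_mem _ hB))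

theorem iterComm_le_mem (L : List (Subgroup G)) (h : ∀ B ∈ L, B.Normal) :
    ∀ B ∈ L, iterComm L ≤ B := by
  cases L with
  | nil => intro B hB; exact absurd hB List.not_mem_nil
  | cons A l =>
    intro B hB
    have hA : A.Normal := h A List.mem_cons_self
    have hl : ∀ B ∈ l, B.Normal := fun B hB => h B (List.mem_cons_of_mem _ hB)
    rcases List.mem_cons.mp hB with rfl | hB'
    · exact foldl_comm_le_head l B hA hl
    · exact foldl_comm_le_mem l A hA hl B hB'

/-! ### The symmetric commutator over an index list -/

variable {I : Type*}

/-- Symmetric commutator subgroup of the family `N i, i ∈ l`, as a join over all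
permutations of the index list `l`. -/
def SCI (N : I → Subgroup G) (l : List I) : Subgroup G :=
  ⨆ p : {l' : List I // List.Perm l' l}, iterComm (p.1.map N)

theorem le_SCI (N : I → Subgroup G) {l l' : List I} (h : List.Perm l' l) :
    iterComm (l'.map N) ≤ SCI N l :=
  le_iSup (fun p : {l' : List I // List.Perm l' l} => iterComm (p.1.map N)) ⟨l', h⟩

theorem SCI_le {N : I → Subgroup G} {l : List I} {M : Subgroup G}
    (h : ∀ l', List.Perm l' l → iterComm (l'.map N) ≤ M) : SCI N l ≤ M :=
  iSup_le fun p => h p.1 p.2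

theorem SCI_perm (N : I → Subgroup G) {l₁ l₂ : List I} (h : List.Perm l₁ l₂) :
    SCI N l₁ = SCI N l₂ := by
  apply le_antisymm
  · exact SCI_le fun l' hl' => le_SCI N (hl'.trans h)
  · exact SCI_le fun l' hl' => le_SCI N (hl'.trans h.symm)

theorem SCI_normal (N : I → Subgroup G) (hN : ∀ i, (N i).Normal) (l : List I) :
    (SCI N l).Normal := by
  apply iSup_normal
  rintro ⟨l', hl'⟩
  apply iterComm_normal
  intro B hB
  rcases List.mem_map.mp hB with ⟨i, _, rfl⟩
  exact hN i

theorem SCI_le_N (N : I → Subgroup G) (hN : ∀ i, (N i).Normal) (l : List I) :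
    ∀ i ∈ l, SCI N l ≤ N i := by
  intro i hi
  apply SCI_le
  intro l' hl'
  have hmem : N i ∈ l'.map N := List.mem_map.mpr ⟨i, hl'.mem_iff.mpr hi, rfl⟩
  exact iterComm_le_mem (l'.map N)
    (fun B hB => by rcases List.mem_map.mp hB with ⟨j, _, rfl⟩; exact hN j) (N i) hmem

theorem iterComm_map_concat (N : I → Subgroup G) {l : List I} (hl : l ≠ []) (j : I) :
    iterComm ((l ++ [j]).map N) = ⁅iterComm (l.map N), N j⁆ := by
  cases l with
  | nil => exact absurd rfl hl
  | cons a t =>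
    rw [List.map_append, List.map_cons]
    exact iterComm_concat (N a) (N j) (t.map N)

theorem SCI_comm_le (N : I → Subgroup G) (hN : ∀ i, (N i).Normal) (l : List I) (j : I) :
    ⁅SCI N l, N j⁆ ≤ SCI N (l ++ [j]) := by
  haveI := SCI_normal N hN (l ++ [j])
  apply commutator_iSup_le
  rintro ⟨l', hl'⟩
  cases l' with
  | nil =>
    simp only [List.map_nil, iterComm_nil, Subgroup.commutator_bot_left]
    exact bot_le
  | cons a t =>
    rw [← iterComm_map_concat N (by simp) j]
    exact le_SCI N (hl'.append_right [j])

/-! ### The key commutator computation -/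

theorem comm_magic {Q : Type*} [Group Q] (x c y d : Q)
    (h1 : Commute x (y * d)) (h2 : Commute c y) (h3 : Commute (x * y) ⁅c, d⁆) :
    ⁅x * c, y * d⁆ = ⁅c, d⁆ := by
  have E1 : ⁅x * c, y * d⁆ = x * ⁅c, y * d⁆ * x⁻¹ * ⁅x, y * d⁆ := by
    simp only [commutatorElement_def]; group
  have E2 : ⁅c, y * d⁆ = ⁅c, y⁆ * (y * ⁅c, d⁆ * y⁻¹) := by
    simp only [commutatorElement_def]; group
  rw [E1, E2, h1.commutator_eq, h2.commutator_eq, mul_one, one_mul]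
  have E3 : x * (y * ⁅c, d⁆ * y⁻¹) * x⁻¹ = x * y * ⁅c, d⁆ * (x * y)⁻¹ := by group
  rw [E3, h3.eq, mul_inv_cancel_right]

/-! ### The abstract core theorem -/

section Core

variable (N : I → Subgroup G) (ρ : I → (G →* G))
variable (hN : ∀ i, (N i).Normal)
variable (hker : ∀ i, ∀ u ∈ N i, ρ i u = 1)
variable (hfix : ∀ i j, ∀ u ∈ N j, ρ i u ∈ N j)
variable (hdef : ∀ i j, i ≠ j → ∀ u ∈ N j, u * (ρ i u)⁻¹ ∈ ⁅N j, N i⁆)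

include hN hfix hdef in
/-- The inductive machine: moving along a left-normed commutator, the defect of the
retraction `ρ m` stays inside the symmetric commutator with `m` adjoined. -/
theorem machine (m : I) :
    ∀ (tail acc : List I), acc ≠ [] → (∀ j ∈ tail, j ≠ m) →
    ∀ (D : Subgroup G), D.Normal → D ≤ SCI N (m :: acc) →
    (∀ a ∈ iterComm (acc.map N), a * (ρ m a)⁻¹ ∈ D) →
    (∀ a ∈ iterComm (acc.map N), ρ m a ∈ iterComm (acc.map N)) →
    ∀ v ∈ iterComm ((acc ++ tail).map N), v * (ρ m v)⁻¹ ∈ SCI N (m :: (acc ++ tail)) := by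
  intro tail
  induction tail with
  | nil =>
    intro acc _ _ D _ hDle hP _ v hv
    rw [List.append_nil] at *
    exact hDle (hP v hv)
  | cons j tl ih =>
    intro acc hacc htail D hDnorm hDle hP hρA v hv
    -- notation
    set A : Subgroup G := iterComm (acc.map N) with hA
    have hAnorm : A.Normal := iterComm_normal _ (by
      intro B hB; rcases List.mem_map.mp hB with ⟨i, _, rfl⟩; exact hN i)
    haveI := hAnorm
    haveI := hN j
    haveI := hN m
    haveI := hDnorm
    have hjm : j ≠ m := htail j List.mem_cons_self
    -- the new accumulator data
    set A' : Subgroup G := ⁅A, N j⁆ with hA'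
    set D' : Subgroup G := (⁅D, N j⁆ ⊔ ⁅⁅A, N j⁆, N m⁆) ⊔ ⁅⁅A, N m⁆, N j⁆ with hD'
    have hD'norm : D'.Normal := by
      haveI h1 : (⁅D, N j⁆).Normal := Subgroup.commutator_normal D (N j)
      haveI h2 : (⁅⁅A, N j⁆, N m⁆).Normal := by
        haveI : (⁅A, N j⁆).Normal := Subgroup.commutator_normal A (N j)
        exact Subgroup.commutator_normal _ _
      haveI h3 : (⁅⁅A, N m⁆, N j⁆).Normal := by
        haveI : (⁅A, N m⁆).Normal := Subgroup.commutator_normal A (N m)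
        exact Subgroup.commutator_normal _ _
      haveI h12 : (⁅D, N j⁆ ⊔ ⁅⁅A, N j⁆, N m⁆).Normal := Subgroup.sup_normal _ _
      exact Subgroup.sup_normal _ _
    haveI := hD'norm
    -- bound : D' is inside the symmetric commutator on `m :: acc ++ [j]`
    have hD'le : D' ≤ SCI N (m :: (acc ++ [j])) := by
      apply sup_le (sup_le ?_ ?_) ?_
      · -- ⁅D, N j⁆
        calc ⁅D, N j⁆ ≤ ⁅SCI N (m :: acc), N j⁆ := Subgroup.commutator_mono hDle le_rfl
          _ ≤ SCI N ((m :: acc) ++ [j]) := SCI_comm_le N hN _ j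
          _ = SCI N (m :: (acc ++ [j])) := by rw [List.cons_append]
      · -- ⁅⁅A, N j⁆, N m⁆ = iterComm ((acc ++ [j] ++ [m]).map N)
        have e1 : iterComm (((acc ++ [j]) ++ [m]).map N) = ⁅⁅A, N j⁆, N m⁆ := by
          rw [iterComm_map_concat N (by simp [hacc]) m, iterComm_map_concat N hacc j]
        rw [← e1]
        refine le_SCI N ?_
        -- (acc ++ [j]) ++ [m] ~ m :: (acc ++ [j])
        exact List.perm_append_comm.trans (List.Perm.refl _)
      · have e1 : iterComm (((acc ++ [m]) ++ [j]).map N) = ⁅⁅A, N m⁆, N j⁆ := by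
          rw [iterComm_map_concat N (by simp [hacc]) j, iterComm_map_concat N hacc m]
        rw [← e1]
        refine le_SCI N ?_
        have p1 : List.Perm ((acc ++ [m]) ++ [j]) (([m] ++ [j]) ++ acc) := by
          rw [List.append_assoc]; exact List.perm_append_comm
        have p2 : List.Perm ([j] ++ acc) (acc ++ [j]) := List.perm_append_comm
        exact p1.trans (p2.cons m)
    -- the defect property propagates to A' = ⁅A, N j⁆
    have hP' : ∀ a ∈ A', a * (ρ m a)⁻¹ ∈ D' := by
      have hle : A' ≤ Hsub (ρ m) D' hD'norm := by
        rw [hA', Subgroup.commutator_le]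
        intro k hk r hr
        rw [mem_Hsub]
        set x := k * (ρ m k)⁻¹ with hx
        set κ := ρ m k with hκ
        set y := r * (ρ m r)⁻¹ with hy
        set d := ρ m r with hd
        have hxD : x ∈ D := hP k hk
        have hκA : κ ∈ A := hρA k hk
        have hyE : y ∈ ⁅N j, N m⁆ := hdef m j hjm.symm r hr
        have hdNj : d ∈ N j := hfix m j r hr
        have hDle' : ⁅D, N j⁆ ≤ D' := le_trans le_sup_left le_sup_left
        have hXle : ⁅⁅A, N j⁆, N m⁆ ≤ D' := le_trans le_sup_right le_sup_left
        have hYle : ⁅⁅A, N m⁆, N j⁆ ≤ D' := le_sup_right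
        have hAE : ⁅A, ⁅N j, N m⁆⁆ ≤ D' := commutator_right_le hXle hYle
        have m1 : ⁅x, r⁆ ∈ D' := hDle' (Subgroup.commutator_mem_commutator hxD hr)
        have m2 : ⁅κ, y⁆ ∈ D' := hAE (Subgroup.commutator_mem_commutator hκA hyE)
        have hcA' : ⁅κ, d⁆ ∈ A' := Subgroup.commutator_mem_commutator hκA hdNj
        have hA'leNj : A' ≤ N j := Subgroup.commutator_le_right A (N j)
        have hA'leA : A' ≤ A := Subgroup.commutator_le_left A (N j)
        have m3x : ⁅x, ⁅κ, d⁆⁆ ∈ D' := hDle' (Subgroup.commutator_mem_commutator hxD (hA'leNj hcA'))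
        have m3y : ⁅y, ⁅κ, d⁆⁆ ∈ D' := by
          have hmem : ⁅y, ⁅κ, d⁆⁆ ∈ ⁅⁅N j, N m⁆, A⁆ :=
            Subgroup.commutator_mem_commutator hyE (hA'leA hcA')
          have hcc : ⁅⁅N j, N m⁆, A⁆ ≤ D' := by
            rw [Subgroup.commutator_comm]; exact hAE
          exact hcc hmem
        have m3 : ⁅x * y, ⁅κ, d⁆⁆ ∈ D' := by
          have e : ⁅x * y, ⁅κ, d⁆⁆ = x * ⁅y, ⁅κ, d⁆⁆ * x⁻¹ * ⁅x, ⁅κ, d⁆⁆ := by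
            simp only [commutatorElement_def]; group
          rw [e]; exact mul_mem (hD'norm.conj_mem _ m3y x) m3x
        have hks : k = x * κ := by rw [hx, hκ]; group
        have hrs : r = y * d := by rw [hy, hd]; group
        set π := QuotientGroup.mk' D' with hπ
        have key : π ⁅k, r⁆ = π ⁅κ, d⁆ := by
          have c1 : Commute (π x) (π y * π d) := by
            rw [← map_mul, ← hrs, ← commutatorElement_eq_one_iff_commute,
              ← map_commutatorElement]
            exact (QuotientGroup.eq_one_iff _).mpr m1
          have c2 : Commute (π κ) (π y) := by
            rw [← commutatorElement_eq_one_iff_commute, ← map_commutatorElement]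
            exact (QuotientGroup.eq_one_iff _).mpr m2
          have c3 : Commute (π x * π y) ⁅π κ, π d⁆ := by
            rw [← map_mul, ← map_commutatorElement, ← commutatorElement_eq_one_iff_commute,
              ← map_commutatorElement]
            exact (QuotientGroup.eq_one_iff _).mpr m3
          have e1 : π ⁅k, r⁆ = ⁅π x * π κ, π y * π d⁆ := by
            rw [map_commutatorElement, ← map_mul, ← map_mul, ← hks, ← hrs]
          rw [e1, comm_magic _ _ _ _ c1 c2 c3, map_commutatorElement]
        have hmemD' : ⁅k, r⁆ * ⁅κ, d⁆⁻¹ ∈ D' := by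
          rw [← QuotientGroup.ker_mk' D', MonoidHom.mem_ker, map_mul, map_inv]
          rw [show (QuotientGroup.mk' D') ⁅k, r⁆ = π ⁅k, r⁆ from rfl, key]
          exact mul_inv_cancel _
        rw [map_commutatorElement]
        exact hmemD'
      exact fun a ha => hle ha
    have hρA' : ∀ a ∈ A', ρ m a ∈ A' := by
      have hle : A' ≤ Subgroup.comap (ρ m) A' := by
        rw [hA', Subgroup.commutator_le]
        intro k hk r hr
        rw [Subgroup.mem_comap, map_commutatorElement]
        exact Subgroup.commutator_mem_commutator (hρA k hk) (hfix m j r hr)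
      exact fun a ha => hle ha
    -- apply the induction hypothesis with the longer accumulator
    have hAeq : iterComm ((acc ++ [j]).map N) = A' := iterComm_map_concat N hacc j
    have hassoc : (acc ++ [j]) ++ tl = acc ++ j :: tl := by
      rw [List.append_assoc]; rfl
    have := ih (acc ++ [j]) (by simp) (fun i hi => htail i (List.mem_cons_of_mem j hi))
      D' hD'norm hD'le (by rw [hAeq]; exact hP') (by rw [hAeq]; exact hρA') v
      (by rw [hassoc]; exact hv)
    rwa [hassoc] at this

include hN hker hfix hdef in
/-- Abstract core theorem: the symmetric commutator equals the intersection. -/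
theorem core : ∀ (l : List I), l ≠ [] → l.Nodup → SCI N l = ⨅ i ∈ l, N i := by
  intro l
  induction l with
  | nil => intro h; exact absurd rfl h
  | cons m J ih =>
    intro _ hnd
    have hmJ : m ∉ J := (List.nodup_cons.mp hnd).1
    have hndJ : J.Nodup := (List.nodup_cons.mp hnd).2
    apply le_antisymm
    · exact le_iInf fun i => le_iInf fun hi => SCI_le_N N hN _ i hi
    · intro u hu
      have humem : ∀ i ∈ m :: J, u ∈ N i := by
        intro i hi
        exact Subgroup.mem_iInf.mp (Subgroup.mem_iInf.mp hu i) hi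
      have hum : u ∈ N m := humem m List.mem_cons_self
      rcases eq_or_ne J [] with rfl | hJ
      · have : u ∈ iterComm ([m].map N) := by
          simpa [iterComm_singleton] using hum
        exact le_SCI N (List.Perm.refl [m]) this
      · have huJ : u ∈ SCI N J := by
          rw [ih hJ hndJ]
          exact Subgroup.mem_iInf.mpr fun i => Subgroup.mem_iInf.mpr fun hi =>
            humem i (List.mem_cons_of_mem m hi)
        have hTnorm : (SCI N (m :: J)).Normal := SCI_normal N hN _
        have claimC : SCI N J ≤ Hsub (ρ m) (SCI N (m :: J)) hTnorm := by
          apply SCI_le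
          intro J' hJ'
          cases J' with
          | nil => exact absurd hJ'.symm.eq_nil hJ
          | cons j₀ rest =>
            intro v hv
            rw [mem_Hsub]
            have hj₀J : j₀ ∈ J := hJ'.mem_iff.mp List.mem_cons_self
            have hj₀ : j₀ ≠ m := fun h => hmJ (h ▸ hj₀J)
            haveI := hN j₀; haveI := hN m
            have hrest : ∀ i ∈ rest, i ≠ m := by
              intro i hi h
              exact hmJ (h ▸ hJ'.mem_iff.mp (List.mem_cons_of_mem j₀ hi))
            have hD1le : ⁅N j₀, N m⁆ ≤ SCI N (m :: [j₀]) := by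
              have e : iterComm ([j₀, m].map N) = ⁅N j₀, N m⁆ := rfl
              rw [← e]
              exact le_SCI N (List.Perm.swap m j₀ [])
            have hres := machine N ρ hN hfix hdef m rest [j₀] (by simp) hrest
              ⁅N j₀, N m⁆ (Subgroup.commutator_normal _ _) hD1le
              (fun a ha => hdef m j₀ (Ne.symm hj₀) a ha)
              (fun a ha => hfix m j₀ a ha) v hv
            have hperm : List.Perm (m :: ([j₀] ++ rest)) (m :: J) := hJ'.cons m
            rwa [SCI_perm N hperm] at hres
        have hfin := claimC huJ
        rw [mem_Hsub, hker m u hum, inv_one, mul_one] at hfin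
        exact hfin

end Core

/-! ### Bridging `symmComm` with `SCI` -/

theorem perm_ofFn_cons {α : Type*} :
    ∀ {n : ℕ} (v : Fin (n + 1) → α) (i : Fin (n + 1)),
      List.Perm (List.ofFn v) (v i :: List.ofFn (v ∘ i.succAbove)) := by
  intro n
  induction n with
  | zero =>
    intro v i
    have hi : i = 0 := Fin.eq_zero i
    subst hi
    simp [List.ofFn_succ]
  | succ n ih =>
    intro v i
    rcases Fin.eq_zero_or_eq_succ i with rfl | ⟨i', rfl⟩
    · rw [List.ofFn_succ]
      simp only [Fin.succAbove_zero]
      exact List.Perm.refl _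
    · have step1 : List.Perm (List.ofFn v)
          (v 0 :: (v i'.succ :: List.ofFn ((v ∘ Fin.succ) ∘ i'.succAbove))) := by
        rw [List.ofFn_succ]
        exact (ih (v ∘ Fin.succ) i').cons (v 0)
      have step2 : List.Perm (v 0 :: (v i'.succ :: List.ofFn ((v ∘ Fin.succ) ∘ i'.succAbove)))
          (v i'.succ :: (v 0 :: List.ofFn ((v ∘ Fin.succ) ∘ i'.succAbove))) :=
        List.Perm.swap (v i'.succ) (v 0) _
      have step3 : v 0 :: List.ofFn ((v ∘ Fin.succ) ∘ i'.succAbove)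
          = List.ofFn (v ∘ i'.succ.succAbove) := by
        rw [List.ofFn_succ]
        congr 1
        · apply congrArg List.ofFn
          funext j
          simp [Function.comp, Fin.succ_succAbove_succ]
      exact (step1.trans step2).trans (by rw [step3])

theorem exists_perm_eq_ofFn {α : Type*} :
    ∀ {n : ℕ} (v : Fin n → α) (l : List α), List.Perm l (List.ofFn v) →
      ∃ σ : Equiv.Perm (Fin n), l = List.ofFn (v ∘ σ) := by
  intro n
  induction n with
  | zero =>
    intro v l h
    exact ⟨1, by simpa using h.eq_nil⟩
  | succ n ih =>
    intro v l h
    cases l with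
    | nil => exact absurd (h.symm.eq_nil) (by simp [List.ofFn_succ])
    | cons a t =>
      have ha : a ∈ List.ofFn v := h.mem_iff.mp List.mem_cons_self
      rw [List.mem_ofFn] at ha
      obtain ⟨i, hi⟩ := ha
      have ht : List.Perm t (List.ofFn (v ∘ i.succAbove)) := by
        have h2 : List.Perm (a :: t) (a :: List.ofFn (v ∘ i.succAbove)) :=
          h.trans (by rw [← hi]; exact perm_ofFn_cons v i)
        exact (List.perm_cons a).mp h2
      obtain ⟨τ, hτ⟩ := ih (v ∘ i.succAbove) t ht
      refine ⟨(finSuccEquiv n).trans ((Equiv.optionCongr τ).trans (finSuccEquiv' i).symm), ?_⟩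
      rw [List.ofFn_succ]
      congr 1
      · simp [Function.comp, Equiv.trans_apply, finSuccEquiv_zero, finSuccEquiv'_symm_none, hi]

theorem symmComm_eq_SCI {p : ℕ} (N : I → Subgroup G) (g : Fin p → I) :
    symmComm (fun x => N (g x)) = SCI N (List.ofFn g) := by
  apply le_antisymm
  · apply iSup_le
    intro σ
    have e : (List.ofFn fun i => N (g (σ i))) = (List.ofFn (g ∘ σ)).map N := by
      rw [List.map_ofFn]; rfl
    rw [e]
    exact le_SCI N (Equiv.Perm.ofFn_comp_perm σ g)
  · apply SCI_le
    intro l' hl'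
    obtain ⟨σ, rfl⟩ := exists_perm_eq_ofFn g l' hl'
    have e : (List.ofFn (g ∘ σ)).map N = List.ofFn fun i => N (g (σ i)) := by
      rw [List.map_ofFn]; rfl
    rw [e]
    exact le_iSup (fun σ : Equiv.Perm (Fin p) =>
      iterComm (List.ofFn fun i => N (g (σ i)))) σ

theorem iInf_ofFn {p : ℕ} (N : I → Subgroup G) (g : Fin p → I) :
    ⨅ i ∈ List.ofFn g, N i = ⨅ j, N (g j) := by
  apply le_antisymm
  · exact le_iInf fun j => iInf_le_of_le (g j)
      (iInf_le_of_le (by rw [List.mem_ofFn]; exact ⟨j, rfl⟩) le_rfl)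
  · refine le_iInf fun i => le_iInf fun hi => ?_
    rw [List.mem_ofFn] at hi
    obtain ⟨j, rfl⟩ := hi
    exact iInf_le _ j

/-! ### Instantiation in a free group -/

section FreeInst

variable {X : Type*} [DecidableEq X]

/-- Normal closure of a single generator. -/
def NG (x : X) : Subgroup (FreeGroup X) := Subgroup.normalClosure {FreeGroup.of x}

/-- The retraction of the free group killing the generator `x`. -/
def ρG (x : X) : FreeGroup X →* FreeGroup X :=
  FreeGroup.lift fun a => if a = x then 1 else FreeGroup.of a

theorem NG_normal (x : X) : (NG x).Normal := Subgroup.normalClosure_normal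

theorem ρG_of_self (x : X) : ρG x (FreeGroup.of x) = 1 := by
  simp [ρG]

theorem ρG_of_ne {a x : X} (h : a ≠ x) : ρG x (FreeGroup.of a) = FreeGroup.of a := by
  simp [ρG, h]

theorem hker_G : ∀ x : X, ∀ u ∈ NG x, ρG x u = 1 := by
  intro x u hu
  have hle : NG x ≤ (ρG x).ker := by
    apply Subgroup.normalClosure_le_normal
    intro s hs
    rw [Set.mem_singleton_iff] at hs
    subst hs
    rw [SetLike.mem_coe, MonoidHom.mem_ker, ρG_of_self]
  rw [← MonoidHom.mem_ker]
  exact hle hu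

theorem hfix_G : ∀ x y : X, ∀ u ∈ NG y, ρG x u ∈ NG y := by
  intro x y u hu
  haveI := NG_normal y
  haveI : (Subgroup.comap (ρG x) (NG y)).Normal := Subgroup.normal_comap (ρG x)
  have hle : NG y ≤ Subgroup.comap (ρG x) (NG y) := by
    apply Subgroup.normalClosure_le_normal
    intro s hs
    rw [Set.mem_singleton_iff] at hs
    subst hs
    rw [SetLike.mem_coe, Subgroup.mem_comap]
    by_cases h : y = x
    · subst h; rw [ρG_of_self]; exact (NG y).one_mem
    · rw [ρG_of_ne h]
      exact Subgroup.subset_normalClosure rfl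
  exact hle hu

theorem haux_G : ∀ (x : X) (u : FreeGroup X), u * (ρG x u)⁻¹ ∈ NG x := by
  intro x u
  haveI := NG_normal x
  induction u with
  | C1 => simp
  | of a =>
    show FreeGroup.of a * (ρG x (FreeGroup.of a))⁻¹ ∈ NG x
    by_cases h : a = x
    · subst h
      rw [ρG_of_self, inv_one, mul_one]
      exact Subgroup.subset_normalClosure rfl
    · rw [ρG_of_ne h, mul_inv_cancel]
      exact (NG x).one_mem
  | inv_of a ih =>
    show (FreeGroup.of a)⁻¹ * (ρG x (FreeGroup.of a)⁻¹)⁻¹ ∈ NG x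
    have e : (FreeGroup.of a)⁻¹ * (ρG x (FreeGroup.of a)⁻¹)⁻¹
        = (FreeGroup.of a)⁻¹ * (FreeGroup.of a * (ρG x (FreeGroup.of a))⁻¹)⁻¹ * FreeGroup.of a := by
      rw [map_inv]; group
    rw [e]
    have := (NG_normal x).conj_mem _ (inv_mem ih) (FreeGroup.of a)⁻¹
    simpa using this
  | mul a b iha ihb =>
    have e : a * b * (ρG x (a * b))⁻¹ = a * (b * (ρG x b)⁻¹) * a⁻¹ * (a * (ρG x a)⁻¹) := by
      rw [map_mul]; group
    rw [e]
    exact mul_mem ((NG_normal x).conj_mem _ ihb a) iha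

theorem hdef_G : ∀ x y : X, x ≠ y → ∀ u ∈ NG y, u * (ρG x u)⁻¹ ∈ ⁅NG y, NG x⁆ := by
  intro x y hxy u hu
  haveI := NG_normal x
  haveI := NG_normal y
  haveI : (⁅NG y, NG x⁆).Normal := Subgroup.commutator_normal _ _
  have hu' : u ∈ Subgroup.closure (Group.conjugatesOfSet {FreeGroup.of y}) := hu
  refine Subgroup.closure_induction (fun c hc => ?_) ?_ (fun a b _ _ iha ihb => ?_)
    (fun a _ iha => ?_) hu'
  · -- conjugates of `of y`
    rw [Group.mem_conjugatesOfSet_iff] at hc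
    obtain ⟨b, hb, hconj⟩ := hc
    rw [Set.mem_singleton_iff] at hb
    subst hb
    rw [isConj_iff] at hconj
    obtain ⟨h, rfl⟩ := hconj
    set w := FreeGroup.of y with hw
    have hρw : ρG x w = w := ρG_of_ne (Ne.symm hxy)
    have hρc : ρG x (h * w * h⁻¹) = ρG x h * w * (ρG x h)⁻¹ := by
      rw [map_mul, map_mul, map_inv, hρw]
    set q := h * (ρG x h)⁻¹ with hq
    set e := ρG x h * w * (ρG x h)⁻¹ with he
    have hqm : q ∈ NG x := haux_G x h
    have hem : e ∈ NG y := by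
      have : w ∈ NG y := Subgroup.subset_normalClosure rfl
      exact (NG_normal y).conj_mem _ this (ρG x h)
    have eq1 : h * w * h⁻¹ * (ρG x (h * w * h⁻¹))⁻¹ = ⁅q, e⁆ := by
      rw [hρc, commutatorElement_def, hq, he]
      group
    rw [eq1, Subgroup.commutator_comm]
    exact Subgroup.commutator_mem_commutator hqm hem
  · simp
  · have e : a * b * (ρG x (a * b))⁻¹ = a * (b * (ρG x b)⁻¹) * a⁻¹ * (a * (ρG x a)⁻¹) := by
      rw [map_mul]; group
    rw [e]
    exact mul_mem (Subgroup.Normal.conj_mem ‹(⁅NG y, NG x⁆).Normal› _ ihb a) iha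
  · have e : a⁻¹ * (ρG x a⁻¹)⁻¹ = a⁻¹ * (a * (ρG x a)⁻¹)⁻¹ * a := by
      rw [map_inv]; group
    rw [e]
    have := Subgroup.Normal.conj_mem ‹(⁅NG y, NG x⁆).Normal› _ (inv_mem iha) a⁻¹
    simpa using this

theorem free_core (l : List X) (hne : l ≠ []) (hnd : l.Nodup) :
    SCI NG l = ⨅ i ∈ l, NG i :=
  core NG ρG NG_normal hker_G hfix_G (fun i j hij u hu => hdef_G i j hij u hu) l hne hnd

end FreeInst

/-! ### Transport along homomorphisms/equivalences -/

section Transport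

variable {G' : Type*} [Group G']

theorem map_foldl_comm (f : G →* G') :
    ∀ (l : List (Subgroup G)) (A : Subgroup G),
      Subgroup.map f (l.foldl (fun X B => ⁅X, B⁆) A)
        = (l.map (Subgroup.map f)).foldl (fun X B => ⁅X, B⁆) (Subgroup.map f A) := by
  intro l
  induction l with
  | nil => intro A; rfl
  | cons B t ih =>
    intro A
    rw [List.map_cons, List.foldl_cons, List.foldl_cons, ← Subgroup.map_commutator]
    exact ih ⁅A, B⁆

theorem map_iterComm (f : G →* G') (L : List (Subgroup G)) :
    Subgroup.map f (iterComm L) = iterComm (L.map (Subgroup.map f)) := by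
  cases L with
  | nil => exact Subgroup.map_bot f
  | cons A l => exact map_foldl_comm f l A

theorem map_symmComm (f : G →* G') {p : ℕ} (M : Fin p → Subgroup G) :
    Subgroup.map f (symmComm M) = symmComm (fun i => Subgroup.map f (M i)) := by
  show Subgroup.map f (⨆ σ : Equiv.Perm (Fin p), iterComm (List.ofFn fun i => M (σ i)))
    = ⨆ σ : Equiv.Perm (Fin p), iterComm (List.ofFn fun i => Subgroup.map f (M (σ i)))
  rw [Subgroup.map_iSup]
  apply iSup_congr
  intro σ
  rw [map_iterComm, List.map_ofFn]
  rfl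

theorem map_iInf_equiv (e : G ≃* G') {η : Sort*} (M : η → Subgroup G) :
    Subgroup.map e.toMonoidHom (⨅ i, M i) = ⨅ i, Subgroup.map e.toMonoidHom (M i) := by
  simp_rw [Subgroup.map_equiv_eq_comap_symm' e]
  exact Subgroup.comap_iInf _ M

end Transport

/-! ### A change-of-basis endomorphism of the free group -/

section Phi

variable {X : Type*} [DecidableEq X]

/-- The endomorphism of the free group replacing the generator `t` with the word `z`. -/
def φh (t : X) (z : FreeGroup X) : FreeGroup X →* FreeGroup X :=
  FreeGroup.lift fun j => if j = t then z else FreeGroup.of j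

theorem φh_of_self (t : X) (z : FreeGroup X) : φh t z (FreeGroup.of t) = z := by
  simp [φh]

theorem φh_of_ne (t : X) (z : FreeGroup X) {a : X} (h : a ≠ t) :
    φh t z (FreeGroup.of a) = FreeGroup.of a := by
  simp [φh, h]

theorem φh_fix_prod (t : X) (z : FreeGroup X) (l : List X) (h : ∀ i ∈ l, i ≠ t) :
    φh t z ((l.map FreeGroup.of).prod) = (l.map FreeGroup.of).prod := by
  induction l with
  | nil => simp
  | cons a u ih =>
    simp only [List.map_cons, List.prod_cons, map_mul]
    rw [φh_of_ne t z (h a List.mem_cons_self),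
      ih fun i hi => h i (List.mem_cons_of_mem a hi)]

end Phi

/-! ### Facts about `R` -/

theorem R_eq_NG {n : ℕ} {i : Fin (n + 1)} (h : i ≠ 0) : R n i = NG (i.pred h) := by
  rw [R, dif_neg h]; rfl

theorem R_zero {n : ℕ} :
    R n 0 = Subgroup.normalClosure {((List.finRange n).map FreeGroup.of).prod} := by
  rw [R, dif_pos rfl, List.ofFn_eq_map]

end SymmProof
open SymmProof

/-- For every proper subset `{i₀, …, i_k} ⊊ {0, …, n}` with `k ≥ 1` (given by an injective,
non-surjective `f : Fin (k+1) → Fin (n+1)`), the symmetric commutator subgroup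
`[R_{i₀}, …, R_{i_k}]_S` equals the intersection `R_{i₀} ∩ ⋯ ∩ R_{i_k}`. -/
theorem symmComm_eq_iInf_of_proper (n k : ℕ) (hk : 1 ≤ k)
    (f : Fin (k + 1) → Fin (n + 1)) (hinj : Function.Injective f)
    (hproper : ¬ Function.Surjective f) :
    symmComm (fun j => R n (f j)) = ⨅ j, R n (f j) := by
  classical
  obtain ⟨v, hv⟩ : ∃ v : Fin (n + 1), v ∉ Set.range f := by
    by_contra h
    push_neg at h
    exact hproper fun b => h b
  by_cases h0 : ∀ j, f j ≠ 0
  · -- the product generator is not involved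
    set g : Fin (k + 1) → Fin n := fun j => (f j).pred (h0 j) with hg
    have hRg : ∀ j, R n (f j) = NG (g j) := fun j => R_eq_NG (h0 j)
    have hginj : Function.Injective g := by
      intro a b hab
      apply hinj
      have h2 := congrArg Fin.succ hab
      simp only [hg] at h2
      rwa [Fin.succ_pred, Fin.succ_pred] at h2
    have e1 : (fun j => R n (f j)) = fun j => NG (g j) := funext hRg
    have hne : List.ofFn g ≠ [] := by
      rw [List.ofFn_succ]; exact List.cons_ne_nil _ _
    rw [e1, symmComm_eq_SCI, free_core _ hne (List.nodup_ofFn.mpr hginj), iInf_ofFn]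
  · -- f attains 0; change basis by an automorphism
    push_neg at h0
    obtain ⟨j₀, hj₀⟩ := h0
    have hv0 : v ≠ 0 := by
      rintro rfl
      exact hv ⟨j₀, hj₀⟩
    set t : Fin n := v.pred hv0 with ht
    have htv : t.succ = v := Fin.succ_pred v hv0
    obtain ⟨l₁, l₂, hsplit⟩ := List.append_of_mem (List.mem_finRange t)
    have hnd : (l₁ ++ t :: l₂).Nodup := by rw [← hsplit]; exact List.nodup_finRange n
    have ht1 : ∀ i ∈ l₁, i ≠ t := by
      intro i hi hit
      subst hit
      exact (List.disjoint_of_nodup_append hnd) hi List.mem_cons_self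
    have ht2 : ∀ i ∈ l₂, i ≠ t := by
      intro i hi hit
      subst hit
      exact (List.nodup_cons.mp (hnd.of_append_right)).1 hi
    set C : FreeGroup (Fin n) := (l₁.map FreeGroup.of).prod with hC
    set D : FreeGroup (Fin n) := (l₂.map FreeGroup.of).prod with hD
    set w₀ : FreeGroup (Fin n) := ((List.finRange n).map FreeGroup.of).prod with hw₀
    have hCD : C * FreeGroup.of t * D = w₀ := by
      rw [hw₀, hsplit, List.map_append, List.prod_append, List.map_cons, List.prod_cons,
        hC, hD, mul_assoc]
    set φ : FreeGroup (Fin n) →* FreeGroup (Fin n) := φh t (C * FreeGroup.of t * D) with hφ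
    set ψ : FreeGroup (Fin n) →* FreeGroup (Fin n) := φh t (C⁻¹ * FreeGroup.of t * D⁻¹) with hψ
    have hψC : ψ C = C := φh_fix_prod t _ l₁ ht1
    have hψD : ψ D = D := φh_fix_prod t _ l₂ ht2
    have hφC : φ C = C := φh_fix_prod t _ l₁ ht1
    have hφD : φ D = D := φh_fix_prod t _ l₂ ht2
    have h₁ : ψ.comp φ = MonoidHom.id _ := by
      apply FreeGroup.ext_hom
      intro a
      by_cases h : a = t
      · subst h
        rw [MonoidHom.comp_apply, MonoidHom.id_apply, hφ, φh_of_self, map_mul, map_mul,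
          hψC, hψD, hψ, φh_of_self]
        group
      · rw [MonoidHom.comp_apply, MonoidHom.id_apply, hφ, φh_of_ne _ _ h, hψ, φh_of_ne _ _ h]
    have h₂ : φ.comp ψ = MonoidHom.id _ := by
      apply FreeGroup.ext_hom
      intro a
      by_cases h : a = t
      · subst h
        rw [MonoidHom.comp_apply, MonoidHom.id_apply, hψ, φh_of_self, map_mul, map_mul,
          map_inv, map_inv, hφC, hφD, hφ, φh_of_self]
        group
      · rw [MonoidHom.comp_apply, MonoidHom.id_apply, hψ, φh_of_ne _ _ h, hφ, φh_of_ne _ _ h]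
    have hsurj : Function.Surjective φ := fun y => ⟨ψ y, DFunLike.congr_fun h₂ y⟩
    have hmapNG : ∀ x : Fin n,
        Subgroup.map φ (NG x) = Subgroup.normalClosure {φ (FreeGroup.of x)} := by
      intro x
      rw [NG, Subgroup.map_normalClosure _ φ hsurj, Set.image_singleton]
    set g : Fin (k + 1) → Fin n := fun j => if h : f j = 0 then t else (f j).pred h with hg
    have hgt : ∀ j (h : f j ≠ 0), (f j).pred h ≠ t := by
      intro j h he
      apply hv
      refine ⟨j, ?_⟩
      have h2 := congrArg Fin.succ he
      rwa [Fin.succ_pred, htv] at h2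
    have hRg : ∀ j, R n (f j) = Subgroup.map φ (NG (g j)) := by
      intro j
      by_cases h : f j = 0
      · simp only [hg, dif_pos h]
        rw [hmapNG t, hφ, φh_of_self, hCD, h, R_zero]
      · simp only [hg, dif_neg h]
        rw [hmapNG _, hφ, φh_of_ne _ _ (hgt j h), R_eq_NG h]
        rfl
    have hginj : Function.Injective g := by
      intro a b hab
      by_cases ha : f a = 0 <;> by_cases hb : f b = 0
      · exact hinj (ha.trans hb.symm)
      · exfalso
        simp only [hg, dif_pos ha, dif_neg hb] at hab
        exact hgt b hb hab.symm
      · exfalso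
        simp only [hg, dif_neg ha, dif_pos hb] at hab
        exact hgt a ha hab
      · simp only [hg, dif_neg ha, dif_neg hb] at hab
        apply hinj
        have h2 := congrArg Fin.succ hab
        rwa [Fin.succ_pred, Fin.succ_pred] at h2
    have e1 : (fun j => R n (f j)) = fun j => Subgroup.map φ (NG (g j)) := funext hRg
    have hne : List.ofFn g ≠ [] := by
      rw [List.ofFn_succ]; exact List.cons_ne_nil _ _
    rw [e1, ← map_symmComm φ (fun j => NG (g j)), symmComm_eq_SCI,
      free_core _ hne (List.nodup_ofFn.mpr hginj), iInf_ofFn]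
    have hfin := map_iInf_equiv (MonoidHom.toMulEquiv φ ψ h₁ h₂) (fun j => NG (g j))
    have hcoe : (MonoidHom.toMulEquiv φ ψ h₁ h₂).toMonoidHom = φ := rfl
    rw [hcoe] at hfin
    exact hfin
end

section
/- Let F be the free group on two generators x₁, x₂, let R₁ and R₂ be the normal closures of x₁ and x₂ respectively, and let R₀ be the normal closure of x₁x₂. Then the commutator [x₁, x₂] does NOT belong to the symmetric commutator subgroup [R₀, R₁, R₂]_S. -/
open scoped commutatorElement

/-- Commutators in the dihedral group `D₄` are central (it is nilpotent of class 2). -/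
lemma d4_comm_central : ∀ a b g : DihedralGroup 4, ⁅a, b⁆ * g = g * ⁅a, b⁆ := by decide

/-- The homomorphism sending `x₁ ↦ r`, `x₂ ↦ s` in `D₄`. -/
noncomputable def φ : FreeGroup (Fin 2) →* DihedralGroup 4 :=
  FreeGroup.lift (fun i => if i = 0 then DihedralGroup.r 1 else DihedralGroup.sr 0)

/-- Any triple commutator of subgroups dies in `D₄`, since `D₄` has nilpotency class 2. -/
lemma triple_comm_le_ker (A B C : Subgroup (FreeGroup (Fin 2))) :
    ⁅⁅A, B⁆, C⁆ ≤ φ.ker := by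
  rw [Subgroup.commutator_le]
  intro g₁ h₁ g₂ _
  rw [MonoidHom.mem_ker, map_commutatorElement]
  have hc : φ g₁ ∈ ⁅(⊤ : Subgroup (DihedralGroup 4)), (⊤ : Subgroup (DihedralGroup 4))⁆ := by
    have : φ g₁ ∈ Subgroup.map φ ⁅A, B⁆ := Subgroup.mem_map_of_mem φ h₁
    rw [Subgroup.map_commutator] at this
    exact Subgroup.commutator_mono le_top le_top this
  have hcen : φ g₁ ∈ Subgroup.center (DihedralGroup 4) := by
    have h2 : ⁅(⊤ : Subgroup (DihedralGroup 4)), (⊤ : Subgroup (DihedralGroup 4))⁆ ≤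
        Subgroup.center _ := by
      rw [Subgroup.commutator_le]
      intro a _ b _
      rw [Subgroup.mem_center_iff]
      intro g
      exact (d4_comm_central a b g).symm
    exact h2 hc
  have : Commute (φ g₁) (φ g₂) := by
    rw [Subgroup.mem_center_iff] at hcen
    exact (hcen (φ g₂)).symm
  rwa [commutatorElement_eq_one_iff_commute]

lemma iterComm_three {G : Type*} [Group G] (N : Fin 3 → Subgroup G) :
    iterComm (List.ofFn N) = ⁅⁅N 0, N 1⁆, N 2⁆ := rfl

/-- In the free group on two generators `x₁ = FreeGroup.of 0`, `x₂ = FreeGroup.of 1`,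
the commutator `[x₁, x₂] = x₁⁻¹x₂⁻¹x₁x₂` does NOT belong to the symmetric commutator
subgroup `[R₀, R₁, R₂]_S`, where `R₁, R₂` are the normal closures of `x₁, x₂` and `R₀`
is the normal closure of `x₁x₂`. -/
theorem commutator_not_mem_symmComm :
    (FreeGroup.of 0)⁻¹ * (FreeGroup.of 1)⁻¹ * FreeGroup.of 0 * FreeGroup.of (1 : Fin 2) ∉
      symmComm (R 2) := by
  intro h
  have hle : symmComm (R 2) ≤ φ.ker := by
    apply iSup_le
    intro σ
    rw [iterComm_three]
    exact triple_comm_le_ker _ _ _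
  have h1 : φ ((FreeGroup.of 0)⁻¹ * (FreeGroup.of 1)⁻¹ * FreeGroup.of 0 *
      FreeGroup.of (1 : Fin 2)) = 1 := hle h
  rw [map_mul, map_mul, map_mul, map_inv, map_inv] at h1
  simp only [φ, FreeGroup.lift_apply_of] at h1
  norm_num at h1
  revert h1
  decide
end

section
/- Let F be the free group on three generators x₁, x₂, x₃, let R_i be the normal closure of x_i for i = 1, 2, 3, and let R₀ be the normal closure of x₁x₂x₃. Then the square of the element w = [[x₁, x₂], [x₁, x₂x₃]], namely w², belongs to the symmetric commutator subgroup [R₀, R₁, R₂, R₃]_S. -/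
/-- The commutator `[u, v] = u⁻¹v⁻¹uv` of two group elements. -/
def commE {G : Type*} [Group G] (u v : G) : G := u⁻¹ * v⁻¹ * u * v





section aux
variable {G : Type*} [Group G]
open scoped commutatorElement

lemma commE_eq (u v : G) : commE u v = ⁅u⁻¹, v⁻¹⁆ := by
  simp [commE, commutatorElement_def]

lemma commE_mem {A B : Subgroup G} {a b : G} (ha : a ∈ A) (hb : b ∈ B) :
    commE a b ∈ ⁅A, B⁆ := by
  rw [commE_eq]
  exact Subgroup.commutator_mem_commutator (A.inv_mem ha) (B.inv_mem hb)

lemma map_commE {H : Type*} [Group H] (f : G →* H) (u v : G) :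
    f (commE u v) = commE (f u) (f v) := by simp [commE]

-- key computation lemmas
lemma key_conj {a c : G} (h : Commute a c) : c⁻¹ * a * c = a := by
  rw [mul_assoc, h.eq, ← mul_assoc, inv_mul_cancel, one_mul]

lemma commE_mul_right {a c : G} (h : Commute a c) (d : G) :
    commE a (c * d) = commE a d := by
  have : commE a (c * d) = a⁻¹ * d⁻¹ * (c⁻¹ * a * c) * d := by
    simp only [commE]; group
  rw [this, key_conj h, commE]

lemma commE_mul_left {c b : G} (h : Commute c b) (a : G) :
    commE (c * a) b = commE a b := by
  have e : commE (c * a) b = a⁻¹ * (c⁻¹ * b⁻¹ * c) * a * b := by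
    simp only [commE]; group
  have h2 : c⁻¹ * b⁻¹ * c = b⁻¹ := key_conj h.symm.inv_left
  rw [e, h2, commE]

lemma commE_mul_left₂ {a c b : G} (h1 : Commute c b) (h2 : Commute (commE a b) c) :
    commE (a * c) b = commE a b := by
  have e : commE (a * c) b = c⁻¹ * (commE a b) * (b⁻¹ * c * b) := by
    simp only [commE]; group
  have h1' : b⁻¹ * c * b = c := key_conj h1
  rw [e, h1', key_conj h2]

lemma commE_cancel (a b : G) : commE a b * commE b a = 1 := by
  simp only [commE]; group

end aux


section tsl
variable {G : Type*} [Group G]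
open scoped commutatorElement

lemma commute_mk_of_mem {K : Subgroup G} [K.Normal] {A B : Subgroup G}
    (h : ⁅A, B⁆ ≤ K) {a b : G} (ha : a ∈ A) (hb : b ∈ B) :
    Commute ((QuotientGroup.mk a : G ⧸ K)) (QuotientGroup.mk b) := by
  rw [← commutatorElement_eq_one_iff_commute]
  have : ((QuotientGroup.mk ⁅a, b⁆ : G ⧸ K)) = ⁅(QuotientGroup.mk a : G ⧸ K), QuotientGroup.mk b⁆ :=
    map_commutatorElement (QuotientGroup.mk' K) a b
  rw [← this, QuotientGroup.eq_one_iff]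
  exact h (Subgroup.commutator_mem_commutator ha hb)

/-- Three subgroups lemma, relative version. -/
lemma three_subgroups {A B C K : Subgroup G} [K.Normal]
    (h1 : ⁅⁅A, B⁆, C⁆ ≤ K) (h2 : ⁅⁅A, C⁆, B⁆ ≤ K) : ⁅⁅B, C⁆, A⁆ ≤ K := by
  let f := QuotientGroup.mk' K
  have hker : f.ker = K := QuotientGroup.ker_mk' K
  rw [← hker] at h1 h2 ⊢
  rw [← Subgroup.map_eq_bot_iff] at h1 h2 ⊢
  rw [Subgroup.map_commutator, Subgroup.map_commutator] at h1 h2 ⊢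
  exact Subgroup.commutator_commutator_eq_bot_of_rotate
    (by rwa [Subgroup.commutator_comm (Subgroup.map f C) (Subgroup.map f A)]) h1

lemma normal_iSup {ι : Sort*} (N : ι → Subgroup G) (h : ∀ i, (N i).Normal) :
    (⨆ i, N i).Normal := by
  constructor
  intro n hn g
  refine Subgroup.iSup_induction N (C := fun x => g * x * g⁻¹ ∈ ⨆ i, N i) hn ?_ ?_ ?_
  · intro i x hx
    exact Subgroup.mem_iSup_of_mem i ((h i).conj_mem x hx g)
  · simpa using Subgroup.one_mem _
  · intro x y hx hy
    have e : g * (x * y) * g⁻¹ = (g * x * g⁻¹) * (g * y * g⁻¹) := by group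
    rw [e]
    exact Subgroup.mul_mem _ hx hy

end tsl

section setup

lemma iterComm_ofFn4 {G : Type*} [Group G] (N : Fin 4 → Subgroup G) :
    iterComm (List.ofFn N) = ⁅⁅⁅N 0, N 1⁆, N 2⁆, N 3⁆ := rfl

lemma R_normal (i : Fin 4) : (R 3 i).Normal := by
  unfold R
  split <;> exact Subgroup.normalClosure_normal

instance : (R 3 0).Normal := R_normal 0
instance : (R 3 1).Normal := R_normal 1
instance : (R 3 2).Normal := R_normal 2
instance : (R 3 3).Normal := R_normal 3

lemma symmComm_R_normal : (symmComm (R 3)).Normal := by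
  apply normal_iSup
  intro σ
  rw [iterComm_ofFn4]
  have h0 := R_normal (σ 0); have h1 := R_normal (σ 1)
  have h2 := R_normal (σ 2); have h3 := R_normal (σ 3)
  infer_instance

lemma perm4_le (a b c d : Fin 4) (h : Function.Bijective ![a, b, c, d]) :
    ⁅⁅⁅R 3 a, R 3 b⁆, R 3 c⁆, R 3 d⁆ ≤ symmComm (R 3) := by
  let σ : Equiv.Perm (Fin 4) := Equiv.ofBijective _ h
  have key : iterComm (List.ofFn fun i => R 3 (σ i)) ≤ symmComm (R 3) :=
    le_iSup (fun σ : Equiv.Perm (Fin 4) => iterComm (List.ofFn fun i => R 3 (σ i))) σ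
  rw [iterComm_ofFn4] at key
  simpa [σ, Equiv.ofBijective] using key

-- generator memberships
lemma x_mem : FreeGroup.of (0 : Fin 3) ∈ R 3 1 := by
  have : R 3 1 = Subgroup.normalClosure {FreeGroup.of (0 : Fin 3)} := by
    unfold R; norm_num
  rw [this]
  exact Subgroup.subset_normalClosure rfl

lemma y_mem : FreeGroup.of (1 : Fin 3) ∈ R 3 2 := by
  have : R 3 2 = Subgroup.normalClosure {FreeGroup.of (1 : Fin 3)} := by
    unfold R; rw [dif_neg (by decide : ¬(2 : Fin 4) = 0)]; rfl
  rw [this]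
  exact Subgroup.subset_normalClosure rfl

lemma z_mem : FreeGroup.of (2 : Fin 3) ∈ R 3 3 := by
  have : R 3 3 = Subgroup.normalClosure {FreeGroup.of (2 : Fin 3)} := by
    unfold R; rw [dif_neg (by decide : ¬(3 : Fin 4) = 0)]; rfl
  rw [this]
  exact Subgroup.subset_normalClosure rfl

lemma c_mem : FreeGroup.of (0 : Fin 3) * FreeGroup.of 1 * FreeGroup.of 2 ∈ R 3 0 := by
  have : R 3 0 = Subgroup.normalClosure
      {FreeGroup.of (0 : Fin 3) * FreeGroup.of 1 * FreeGroup.of 2} := by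
    unfold R
    norm_num
    rw [← mul_assoc]
  rw [this]
  exact Subgroup.subset_normalClosure rfl

end setup

/-- The core commutator-calculus computation. -/
lemma core_calc {G : Type*} [Group G]
    (x y z p q r u q' r'' s' p'' n T Qt m : G)
    (hp : p = commE x (x * y * z))
    (hq : q = commE y (x * y * z))
    (hr : r = commE z (x * y * z))
    (hu : u = commE x y)
    (hq' : q' = y * q * y⁻¹)
    (hr'' : r'' = (y * z) * r * (y * z)⁻¹)
    (hs' : s' = z * (commE x z) * z⁻¹)
    (hp'' : p'' = z * p * z⁻¹)
    (hn : n = commE p z⁻¹)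
    (hT : T = y * (commE y z⁻¹) * y⁻¹)
    (hQt : Qt = (y * z) * q * (y * z)⁻¹)
    (hm : m = y * (commE q z⁻¹) * y⁻¹)
    (c1 : Commute u r'')
    (c2 : Commute s' q')
    (c3 : Commute T p)
    (c4 : Commute n q')
    (c5 : Commute (commE p q'⁻¹) n)
    (c6 : Commute (commE Qt⁻¹ p) T)
    (c7 : Commute m p) :
    (commE (commE x y) (commE x (y * z))) ^ 2 = 1 := by
  subst hp hq hr hu hq' hr'' hs' hp'' hn hT hQt hm
  -- abbreviations (as equations)
  have e0 : commE x (y * z) = commE x (x * y * z) := by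
    simp only [commE]; group
  rw [e0]
  -- the two expressions for w
  have hF1 : commE x (x * y * z) =
      ((y * z) * (commE z (x * y * z)) * (y * z)⁻¹)⁻¹ *
        (y * (commE y (x * y * z)) * y⁻¹)⁻¹ := by
    simp only [commE]; group
  have hF2 : commE x y =
      (z * (commE x z) * z⁻¹)⁻¹ * (z * (commE x (x * y * z)) * z⁻¹) := by
    simp only [commE]; group
  have hF3 : commE x y =
      ((y * z) * (commE y (x * y * z)) * (y * z)⁻¹)⁻¹ * (y * (commE y z⁻¹) * y⁻¹)⁻¹ := by
    simp only [commE]; group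
  have hF4 : ((y * z) * (commE y (x * y * z)) * (y * z)⁻¹)⁻¹ =
      (y * (commE (commE y (x * y * z)) z⁻¹) * y⁻¹)⁻¹ *
        (y * (commE y (x * y * z)) * y⁻¹)⁻¹ := by
    simp only [commE]; group
  have hF5 : z * (commE x (x * y * z)) * z⁻¹ =
      (commE x (x * y * z)) * (commE (commE x (x * y * z)) z⁻¹) := by
    simp only [commE]; group
  -- first expression : w = commE p q'⁻¹
  have stepA : commE (commE x y) (commE x (x * y * z)) =
      commE (commE x y) ((y * (commE y (x * y * z)) * y⁻¹))⁻¹ := by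
    conv_lhs => rw [hF1]
    exact commE_mul_right c1.inv_right _
  have stepB : commE (commE x y) ((y * (commE y (x * y * z)) * y⁻¹))⁻¹ =
      commE (z * (commE x (x * y * z)) * z⁻¹) ((y * (commE y (x * y * z)) * y⁻¹))⁻¹ := by
    conv_lhs => rw [hF2]
    exact commE_mul_left c2.inv_left.inv_right _
  have stepC : commE (z * (commE x (x * y * z)) * z⁻¹)
        ((y * (commE y (x * y * z)) * y⁻¹))⁻¹ =
      commE (commE x (x * y * z)) ((y * (commE y (x * y * z)) * y⁻¹))⁻¹ := by
    conv_lhs => rw [hF5]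
    exact commE_mul_left₂ c4.inv_right c5
  -- second expression : w = commE q'⁻¹ p
  have stepD : commE (commE x y) (commE x (x * y * z)) =
      commE (((y * z) * (commE y (x * y * z)) * (y * z)⁻¹)⁻¹) (commE x (x * y * z)) := by
    conv_lhs => rw [hF3]
    exact commE_mul_left₂ c3.inv_left c6.inv_right
  have stepE : commE (((y * z) * (commE y (x * y * z)) * (y * z)⁻¹)⁻¹) (commE x (x * y * z)) =
      commE ((y * (commE y (x * y * z)) * y⁻¹))⁻¹ (commE x (x * y * z)) := by
    conv_lhs => rw [hF4]
    exact commE_mul_left c7.inv_left _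
  have A : commE (commE x y) (commE x (x * y * z)) =
      commE (commE x (x * y * z)) ((y * (commE y (x * y * z)) * y⁻¹))⁻¹ :=
    (stepA.trans stepB).trans stepC
  have B : commE (commE x y) (commE x (x * y * z)) =
      commE ((y * (commE y (x * y * z)) * y⁻¹))⁻¹ (commE x (x * y * z)) :=
    stepD.trans stepE
  rw [sq]
  nth_rewrite 1 [A]
  nth_rewrite 1 [B]
  exact commE_cancel _ _

namespace Pi4Work

abbrev F3 := FreeGroup (Fin 3)

def xF : F3 := FreeGroup.of 0
def yF : F3 := FreeGroup.of 1
def zF : F3 := FreeGroup.of 2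
def cF : F3 := xF * yF * zF
def pF : F3 := commE xF cF
def qF : F3 := commE yF cF
def rF : F3 := commE zF cF
def uF : F3 := commE xF yF
def q'F : F3 := yF * qF * yF⁻¹
def r''F : F3 := (yF * zF) * rF * (yF * zF)⁻¹
def s'F : F3 := zF * (commE xF zF) * zF⁻¹
def p''F : F3 := zF * pF * zF⁻¹
def nF : F3 := commE pF zF⁻¹
def TF : F3 := yF * (commE yF zF⁻¹) * yF⁻¹
def QtF : F3 := (yF * zF) * qF * (yF * zF)⁻¹
def mF : F3 := yF * (commE qF zF⁻¹) * yF⁻¹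

lemma xF_mem : xF ∈ R 3 1 := x_mem
lemma yF_mem : yF ∈ R 3 2 := y_mem
lemma zF_mem : zF ∈ R 3 3 := z_mem
lemma cF_mem : cF ∈ R 3 0 := c_mem

lemma pF_mem : pF ∈ ⁅R 3 1, R 3 0⁆ := commE_mem xF_mem cF_mem
lemma qF_mem : qF ∈ ⁅R 3 2, R 3 0⁆ := commE_mem yF_mem cF_mem
lemma rF_mem : rF ∈ ⁅R 3 3, R 3 0⁆ := commE_mem zF_mem cF_mem
lemma uF_mem : uF ∈ ⁅R 3 1, R 3 2⁆ := commE_mem xF_mem yF_mem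
lemma q'F_mem : q'F ∈ ⁅R 3 2, R 3 0⁆ :=
  (Subgroup.commutator_normal (R 3 2) (R 3 0)).conj_mem _ qF_mem yF
lemma r''F_mem : r''F ∈ ⁅R 3 3, R 3 0⁆ :=
  (Subgroup.commutator_normal (R 3 3) (R 3 0)).conj_mem _ rF_mem (yF * zF)
lemma s'F_mem : s'F ∈ ⁅R 3 1, R 3 3⁆ :=
  (Subgroup.commutator_normal (R 3 1) (R 3 3)).conj_mem _ (commE_mem xF_mem zF_mem) zF
lemma nF_mem : nF ∈ ⁅⁅R 3 1, R 3 0⁆, R 3 3⁆ :=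
  commE_mem pF_mem ((R 3 3).inv_mem zF_mem)
lemma TF_mem : TF ∈ ⁅R 3 2, R 3 3⁆ :=
  (Subgroup.commutator_normal (R 3 2) (R 3 3)).conj_mem _
    (commE_mem yF_mem ((R 3 3).inv_mem zF_mem)) yF
lemma QtF_mem : QtF ∈ ⁅R 3 2, R 3 0⁆ :=
  (Subgroup.commutator_normal (R 3 2) (R 3 0)).conj_mem _ qF_mem (yF * zF)
lemma mF_mem : mF ∈ ⁅⁅R 3 2, R 3 0⁆, R 3 3⁆ :=
  (Subgroup.commutator_normal ⁅R 3 2, R 3 0⁆ (R 3 3)).conj_mem _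
    (commE_mem qF_mem ((R 3 3).inv_mem zF_mem)) yF

-- The vanishing lemmas: certain commutators land in the symmetric commutator subgroup K.

local notation "K" => symmComm (R 3)

instance : (symmComm (R 3)).Normal := symmComm_R_normal

lemma V1 : ⁅⁅R 3 3, R 3 0⁆, ⁅R 3 1, R 3 2⁆⁆ ≤ K :=
  three_subgroups (perm4_le 1 2 3 0 (by decide)) (perm4_le 1 2 0 3 (by decide))

lemma V2 : ⁅⁅R 3 1, R 3 3⁆, ⁅R 3 2, R 3 0⁆⁆ ≤ K :=
  three_subgroups (perm4_le 2 0 1 3 (by decide)) (perm4_le 2 0 3 1 (by decide))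

lemma V3 : ⁅⁅R 3 2, R 3 3⁆, ⁅R 3 1, R 3 0⁆⁆ ≤ K :=
  three_subgroups (perm4_le 1 0 2 3 (by decide)) (perm4_le 1 0 3 2 (by decide))

lemma V4 : ⁅⁅⁅R 3 1, R 3 0⁆, R 3 3⁆, ⁅R 3 2, R 3 0⁆⁆ ≤ K :=
  le_trans (Subgroup.commutator_mono le_rfl (Subgroup.commutator_le_left (R 3 2) (R 3 0)))
    (perm4_le 1 0 3 2 (by decide))

lemma V5 : ⁅⁅R 3 0, R 3 3⁆, ⁅R 3 1, R 3 2⁆⁆ ≤ K :=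
  three_subgroups (perm4_le 1 2 0 3 (by decide)) (perm4_le 1 2 3 0 (by decide))

lemma V6 : ⁅⁅R 3 2, R 3 3⁆, ⁅R 3 0, R 3 1⁆⁆ ≤ K :=
  three_subgroups (perm4_le 0 1 2 3 (by decide)) (perm4_le 0 1 3 2 (by decide))

lemma V7 : ⁅⁅⁅R 3 2, R 3 0⁆, R 3 3⁆, R 3 1⁆ ≤ K :=
  perm4_le 2 0 3 1 (by decide)

noncomputable def Phi : F3 →* F3 ⧸ symmComm (R 3) := QuotientGroup.mk' _


end Pi4Work

open Pi4Work in
/-- In the free group on three generators `x₁, x₂, x₃` (with `x_{i+1} = FreeGroup.of i`),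
the square of the element `w = [[x₁, x₂], [x₁, x₂x₃]]` belongs to the symmetric
commutator subgroup `[R₀, R₁, R₂, R₃]_S`, where `R_i` is the normal closure of `x_i`
and `R₀` is the normal closure of `x₁x₂x₃`. -/
theorem generator_sq_mem_symmComm :
    (commE (commE (FreeGroup.of 0) (FreeGroup.of 1))
        (commE (FreeGroup.of 0) (FreeGroup.of 1 * FreeGroup.of (2 : Fin 3)))) ^ 2 ∈
      symmComm (R 3) := by
  refine (QuotientGroup.eq_one_iff _).mp ?_
  show Phi ((commE (commE (FreeGroup.of 0) (FreeGroup.of 1))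
        (commE (FreeGroup.of 0) (FreeGroup.of 1 * FreeGroup.of (2 : Fin 3)))) ^ 2) = 1
  rw [map_pow, map_commE, map_commE, map_commE, map_mul]
  have q1 : Phi pF = commE (Phi xF) (Phi xF * Phi yF * Phi zF) := by
    simp only [pF, cF, map_commE, map_mul]
  have q2 : Phi qF = commE (Phi yF) (Phi xF * Phi yF * Phi zF) := by
    simp only [qF, cF, map_commE, map_mul]
  have q3 : Phi rF = commE (Phi zF) (Phi xF * Phi yF * Phi zF) := by
    simp only [rF, cF, map_commE, map_mul]
  have q4 : Phi uF = commE (Phi xF) (Phi yF) := by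
    simp only [uF, map_commE]
  have q5 : Phi q'F = Phi yF * Phi qF * (Phi yF)⁻¹ := by
    simp only [q'F, map_mul, map_inv]
  have q6 : Phi r''F = (Phi yF * Phi zF) * Phi rF * (Phi yF * Phi zF)⁻¹ := by
    simp only [r''F, map_mul, map_inv]
  have q7 : Phi s'F = Phi zF * (commE (Phi xF) (Phi zF)) * (Phi zF)⁻¹ := by
    simp only [s'F, map_mul, map_inv, map_commE]
  have q8 : Phi p''F = Phi zF * Phi pF * (Phi zF)⁻¹ := by
    simp only [p''F, map_mul, map_inv]
  have q9 : Phi nF = commE (Phi pF) (Phi zF)⁻¹ := by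
    simp only [nF, map_commE, map_inv]
  have q10 : Phi TF = Phi yF * (commE (Phi yF) (Phi zF)⁻¹) * (Phi yF)⁻¹ := by
    simp only [TF, map_mul, map_inv, map_commE]
  have q11 : Phi QtF = (Phi yF * Phi zF) * Phi qF * (Phi yF * Phi zF)⁻¹ := by
    simp only [QtF, map_mul, map_inv]
  have q12 : Phi mF = Phi yF * (commE (Phi qF) (Phi zF)⁻¹) * (Phi yF)⁻¹ := by
    simp only [mF, map_mul, map_inv, map_commE]
  refine core_calc (Phi xF) (Phi yF) (Phi zF) (Phi pF) (Phi qF) (Phi rF) (Phi uF) (Phi q'F)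
    (Phi r''F) (Phi s'F) (Phi p''F) (Phi nF) (Phi TF) (Phi QtF) (Phi mF)
    q1 q2 q3 q4 q5 q6 q7 q8 q9 q10 q11 q12 ?_ ?_ ?_ ?_ ?_ ?_ ?_
  · exact (commute_mk_of_mem V1 r''F_mem uF_mem).symm
  · exact commute_mk_of_mem V2 s'F_mem q'F_mem
  · exact commute_mk_of_mem V3 TF_mem pF_mem
  · exact commute_mk_of_mem V4 nF_mem q'F_mem
  · have hn5 : nF ∈ ⁅R 3 0, R 3 3⁆ :=
      Subgroup.commutator_mono (Subgroup.commutator_le_right (R 3 1) (R 3 0)) le_rfl nF_mem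
    have hm5 : commE pF q'F⁻¹ ∈ ⁅R 3 1, R 3 2⁆ :=
      commE_mem (Subgroup.commutator_le_left (R 3 1) (R 3 0) pF_mem)
        ((R 3 2).inv_mem (Subgroup.commutator_le_left (R 3 2) (R 3 0) q'F_mem))
    exact (commute_mk_of_mem V5 hn5 hm5).symm
  · have hm6 : commE QtF⁻¹ pF ∈ ⁅R 3 0, R 3 1⁆ :=
      commE_mem ((R 3 0).inv_mem (Subgroup.commutator_le_right (R 3 2) (R 3 0) QtF_mem))
        (Subgroup.commutator_le_left (R 3 1) (R 3 0) pF_mem)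
    exact (commute_mk_of_mem V6 TF_mem hm6).symm
  · exact commute_mk_of_mem V7 mF_mem (Subgroup.commutator_le_left (R 3 1) (R 3 0) pF_mem)
end

section
/- Let F be the free group on four generators x₁, x₂, x₃, x₄, let R_i be the normal closure of x_i for i = 1, 2, 3, 4, and let R₀ be the normal closure of x₁x₂x₃x₄. Then the element w = [[[x₁, x₂], [x₁, x₂x₃]], [[x₁, x₂], [x₁, x₂x₃x₄]]] belongs to R₀ ∩ R₁ ∩ R₂ ∩ R₃ ∩ R₄. -/
/-! A word lies in the normal closure of `r` as soon as every homomorphism killing `r` kills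
it. Under `x_i ↦ 1` the word `w` collapses because `[x₁, x₂]` becomes trivial (`i = 1, 2`),
or `[x₁, x₂x₃] = [x₁, x₂]` (`i = 3`), or its two halves coincide (`i = 4`); modulo `R₀` one has
`x₂x₃x₄ = x₁⁻¹`, so `[x₁, x₂x₃x₄]` is trivial. -/

universe u

section Commutator

variable {G H : Type*} [Group G] [Group H]

@[simp]
theorem commE_one_left (b : G) : commE 1 b = 1 := by
  simp [commE]

@[simp]
theorem commE_one_right (a : G) : commE a 1 = 1 := by
  simp [commE]

@[simp]
theorem commE_self (a : G) : commE a a = 1 := by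
  simp [commE]

@[simp]
theorem commE_inv_right_self (a : G) : commE a a⁻¹ = 1 := by
  simp [commE]

theorem map_commE_s14 (f : G →* H) (a b : G) : f (commE a b) = commE (f a) (f b) := by
  simp [commE]

def commWord (a b c d : G) : G :=
  commE (commE (commE a b) (commE a (b * c))) (commE (commE a b) (commE a (b * c * d)))

theorem map_commWord (f : G →* H) (a b c d : G) :
    f (commWord a b c d) = commWord (f a) (f b) (f c) (f d) := by
  simp only [commWord, map_commE_s14, map_mul]

@[simp]
theorem commWord_one_first (b c d : G) : commWord 1 b c d = 1 := by
  simp [commWord]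

@[simp]
theorem commWord_one_second (a c d : G) : commWord a 1 c d = 1 := by
  simp [commWord]

@[simp]
theorem commWord_one_third (a b d : G) : commWord a b 1 d = 1 := by
  simp [commWord]

@[simp]
theorem commWord_one_fourth (a b c : G) : commWord a b c 1 = 1 := by
  simp [commWord]

theorem commWord_eq_one_of_mul_eq_one {a b c d : G} (h : a * (b * (c * d)) = 1) :
    commWord a b c d = 1 := by
  have hbcd : b * c * d = a⁻¹ := eq_inv_of_mul_eq_one_right (by simpa only [mul_assoc] using h)
  simp [commWord, hbcd]

end Commutator

theorem mem_normalClosure_singleton_of_forall_hom {G : Type u} [Group G] {r g : G}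
    (h : ∀ (H : Type u) [Group H] (f : G →* H), f r = 1 → f g = 1) :
    g ∈ Subgroup.normalClosure {r} := by
  rw [← QuotientGroup.eq_one_iff]
  exact h _ (QuotientGroup.mk' _)
    ((QuotientGroup.eq_one_iff r).2 (Subgroup.subset_normalClosure rfl))

theorem R_zero (n : ℕ) :
    R n 0 = Subgroup.normalClosure {(List.ofFn fun j : Fin n => FreeGroup.of j).prod} :=
  dif_pos rfl

theorem R_succ (n : ℕ) (i : Fin n) : R n i.succ = Subgroup.normalClosure {FreeGroup.of i} := by
  rw [R, dif_neg i.succ_ne_zero, Fin.pred_succ]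

local notation "w" => commWord (FreeGroup.of (0 : Fin 4)) (FreeGroup.of 1) (FreeGroup.of 2)
  (FreeGroup.of 3)

theorem commWord_mem_R_zero : w ∈ R 4 0 := by
  rw [R_zero]
  refine mem_normalClosure_singleton_of_forall_hom fun _ _ f hf => ?_
  simp only [List.ofFn_succ, List.ofFn_zero, List.prod_cons, List.prod_nil, mul_one,
    map_mul] at hf
  rw [map_commWord]
  exact commWord_eq_one_of_mul_eq_one hf

theorem commWord_mem_R_succ (i : Fin 4) : w ∈ R 4 i.succ := by
  rw [R_succ]
  refine mem_normalClosure_singleton_of_forall_hom fun _ _ f hf => ?_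
  rw [map_commWord]
  fin_cases i <;> simp_all

/-- In the free group on four generators `x₁, x₂, x₃, x₄` (with `x_{i+1} = FreeGroup.of i`),
the element `w = [[[x₁, x₂], [x₁, x₂x₃]], [[x₁, x₂], [x₁, x₂x₃x₄]]]` belongs to
`R₀ ∩ R₁ ∩ R₂ ∩ R₃ ∩ R₄`, where `R_i` is the normal closure of `x_i` and `R₀` is the
normal closure of `x₁x₂x₃x₄`. -/
theorem generator_mem_iInf :
    commE
        (commE (commE (FreeGroup.of 0) (FreeGroup.of 1))
          (commE (FreeGroup.of 0) (FreeGroup.of 1 * FreeGroup.of (2 : Fin 4))))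
        (commE (commE (FreeGroup.of 0) (FreeGroup.of 1))
          (commE (FreeGroup.of 0)
            (FreeGroup.of 1 * FreeGroup.of 2 * FreeGroup.of (3 : Fin 4)))) ∈
      R 4 0 ⊓ R 4 1 ⊓ R 4 2 ⊓ R 4 3 ⊓ R 4 4 :=
  ⟨⟨⟨⟨commWord_mem_R_zero, commWord_mem_R_succ 0⟩, commWord_mem_R_succ 1⟩,
    commWord_mem_R_succ 2⟩, commWord_mem_R_succ 3⟩
end

section
/- The group homomorphism ρ from the free group on two generators x, y to SL₂(ℤ) determined by ρ(x) = [[1, 2], [0, 1]] (the matrix with rows (1, 2) and (0, 1)) and ρ(y) = [[1, 0], [2, 1]] (the matrix with rows (1, 0) and (2, 1)) is injective; in other words, these two matrices generate a free subgroup of rank 2 in SL₂(ℤ). -/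
/-!
The two matrices act on `ℤ²` by transvections: `x` adds twice the second coordinate to the first,
and `y` twice the first to the second. Hence every nonzero power `xⁿ` adds `2n·q` to `p`, so it
sends vectors `(p, q)` with `|p| < |q|` to vectors with `|q| < |p|`, because
`|p + 2nq| ≥ 2|q| - |p| > |q|`; symmetrically for `yⁿ`. The ping-pong lemma, applied to the
regions `{|q| < |p|}` and `{|p| < |q|}`, then shows that every nontrivial reduced word moves one
region into the other and so is not the identity.
-/

open Function Pointwise

theorem FreeGroup.injective_lift_of_ping_pong_zpow {ι G α : Type*} [Nontrivial ι] [Group G]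
    [MulAction G α] (a : ι → G) (X : ι → Set α) (hXnonempty : ∀ i, (X i).Nonempty)
    (hXdisj : Pairwise (Disjoint on X))
    (hpp : Pairwise fun i j => ∀ n : ℤ, n ≠ 0 → a i ^ n • X j ⊆ X i) :
    Injective (FreeGroup.lift a) := by
  have hlift : FreeGroup.lift a = (Monoid.CoprodI.lift fun i => FreeGroup.lift fun _ => a i).comp
      freeGroupEquivCoprodI.toMonoidHom := by
    ext i
    simp
  rw [hlift, MonoidHom.coe_comp]
  refine Injective.comp ?_ freeGroupEquivCoprodI.injective
  have hcard : ∃ _ : ι, 3 ≤ Cardinal.mk (FreeGroup Unit) :=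
    ⟨Classical.arbitrary ι,
      (Cardinal.natCast_lt_aleph0 (n := 3)).le.trans (Cardinal.infinite_iff.1 inferInstance)⟩
  refine Monoid.CoprodI.lift_injective_of_ping_pong _ (Or.inr hcard) X hXnonempty hXdisj ?_
  intro i j hij h hh
  obtain ⟨n, rfl⟩ := FreeGroup.freeGroupUnitEquivInt.symm.surjective h
  have hn : n ≠ 0 := by
    rintro rfl
    exact hh rfl
  simpa [FreeGroup.freeGroupUnitEquivInt] using hpp hij n hn

namespace Matrix.SpecialLinearGroup

variable {ι R : Type*} [DecidableEq ι] [Fintype ι] [CommRing R] {i j : ι}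

theorem transvection_zpow (hij : i ≠ j) (b : R) (n : ℤ) :
    transvection hij b ^ n = transvection hij (n * b) := by
  induction n with
  | zero => simp
  | succ n ih =>
    rw [_root_.zpow_add_one, ih, ← transvection_add]
    congr 1
    push_cast
    ring
  | pred n ih =>
    rw [_root_.zpow_sub_one, ih, transvection_inv, ← transvection_add]
    congr 1
    push_cast
    ring

theorem transvection_smul_apply_self (hij : i ≠ j) (b : R) (v : ι → R) :
    (transvection hij b • v) i = v i + b * v j := by
  simp [SpecialLinearGroup.smul_def, transvection_coe, Matrix.add_mulVec, Matrix.single_mulVec]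

theorem transvection_smul_apply_of_ne (hij : i ≠ j) (b : R) (v : ι → R) {k : ι} (hk : k ≠ i) :
    (transvection hij b • v) k = v k := by
  simp [SpecialLinearGroup.smul_def, transvection_coe, Matrix.add_mulVec, Matrix.single_mulVec, hk]

end Matrix.SpecialLinearGroup

open Matrix.SpecialLinearGroup

theorem abs_lt_abs_add_mul {R : Type*} [CommRing R] [LinearOrder R] [IsStrictOrderedRing R]
    {x y b : R} (hb : 2 ≤ |b|) (hxy : |x| < |y|) : |y| < |x + b * y| :=
  calc |y| < 2 * |y| - |x| := by linarith
    _ ≤ |b| * |y| - |x| := by gcongr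
    _ ≤ |x + b * y| := by
      rw [← abs_mul, add_comm]
      exact abs_sub_abs_le_abs_add _ _

section absDominant

variable {ι R : Type*}

def absDominant [Lattice R] [AddGroup R] (i : ι) : Set (ι → R) :=
  {v | ∀ j ≠ i, |v j| < |v i|}

theorem absDominant_nonempty [DecidableEq ι] [Ring R] [LinearOrder R] [IsStrictOrderedRing R]
    (i : ι) : (absDominant i : Set (ι → R)).Nonempty :=
  ⟨Pi.single i 1, fun j hj => by simp [hj]⟩

theorem pairwise_disjoint_absDominant [Lattice R] [AddGroup R] :
    Pairwise (Disjoint on (absDominant : ι → Set (ι → R))) :=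
  fun i j hij => Set.disjoint_left.2 fun _ hi hj => (hi j hij.symm).asymm (hj i hij)

theorem transvection_smul_mem_absDominant [DecidableEq ι] [Fintype ι] [CommRing R] [LinearOrder R]
    [IsStrictOrderedRing R] {i j : ι} (hij : i ≠ j) {b : R} (hb : 2 ≤ |b|) {v : ι → R}
    (hv : v ∈ absDominant j) : transvection hij b • v ∈ absDominant i := by
  have hi : |v j| < |(transvection hij b • v) i| := by
    rw [transvection_smul_apply_self]
    exact abs_lt_abs_add_mul hb (hv i hij)
  intro k hk
  rw [transvection_smul_apply_of_ne hij b v hk]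
  rcases eq_or_ne k j with rfl | hkj
  · exact hi
  · exact (hv k hkj).trans hi

end absDominant

/-- Sanov's theorem: the homomorphism `ρ` from the free group on two generators
`x = FreeGroup.of 0`, `y = FreeGroup.of 1` to `SL₂(ℤ)` determined by
`ρ(x) = !![1, 2; 0, 1]` and `ρ(y) = !![1, 0; 2, 1]` is injective; i.e. these two
matrices generate a free subgroup of rank 2 in `SL₂(ℤ)`. -/
theorem sanov_injective (ρ : FreeGroup (Fin 2) →* Matrix.SpecialLinearGroup (Fin 2) ℤ)
    (hx : (ρ (FreeGroup.of 0) : Matrix (Fin 2) (Fin 2) ℤ) = !![1, 2; 0, 1])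
    (hy : (ρ (FreeGroup.of 1) : Matrix (Fin 2) (Fin 2) ℤ) = !![1, 0; 2, 1]) :
    Function.Injective ρ := by
  obtain ⟨a, rfl⟩ := FreeGroup.lift.surjective ρ
  simp only [FreeGroup.lift_apply_of] at hx hy
  have ha : ∀ i j (hij : i ≠ j), a i = transvection hij 2 := by
    intro i j hij
    fin_cases i <;> fin_cases j
    all_goals first
      | exact absurd rfl hij
      | ext k l; fin_cases k <;> fin_cases l <;> simp [hx, hy, transvection_coe]
  refine FreeGroup.injective_lift_of_ping_pong_zpow a (absDominant (R := ℤ)) absDominant_nonempty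
    pairwise_disjoint_absDominant fun i j hij n hn => ?_
  rw [ha i j hij, transvection_zpow, Set.smul_set_subset_iff]
  refine fun v hv => transvection_smul_mem_absDominant hij ?_ hv
  rw [Int.cast_id, abs_mul, abs_two]
  linarith [Int.one_le_abs hn]
end

section
/- Let n ≥ 1, let Fₙ be the free group on generators x₁, …, xₙ, and let F₂ be the free group on two generators x, y. The group homomorphism φ : Fₙ → F₂ determined by φ(x_i) = [x, yⁱ] = x⁻¹y⁻ⁱxyⁱ for 1 ≤ i ≤ n is injective. -/
open FreeGroup List

namespace PingPongAux
variable {α : Type*} [DecidableEq α]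

lemma mk_single_mul_toWord' (a : α) (b : Bool) (g : FreeGroup α) :
    (FreeGroup.mk [(a, b)] * g).toWord =
      (List.casesOn g.toWord [(a,b)] fun hd tl =>
        if a = hd.1 ∧ b = !hd.2 then tl else (a,b) :: hd :: tl) := by
  conv_lhs => rw [← FreeGroup.mk_toWord (x := g)]
  rw [FreeGroup.mul_mk, FreeGroup.toWord_mk]
  show FreeGroup.reduce ((a,b) :: g.toWord) = _
  rw [FreeGroup.reduce.cons, FreeGroup.reduce_toWord]

/-- Multiplying by a single letter with no cancellation. -/
lemma single_mul_toWord (a : α) (b : Bool) (g : FreeGroup α)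
    (h : g.toWord.head? ≠ some (a, !b)) :
    (FreeGroup.mk [(a, b)] * g).toWord = (a, b) :: g.toWord := by
  rw [mk_single_mul_toWord']
  cases hw : g.toWord with
  | nil => rfl
  | cons hd tl =>
    simp only []
    rw [if_neg]
    rintro ⟨h1, h2⟩
    apply h
    rw [hw]
    obtain ⟨c, d⟩ := hd; simp at h1 h2; simp [h1, h2]

/-- Multiplying by a single letter with cancellation. -/
lemma single_mul_toWord_cancel (a : α) (b : Bool) (g : FreeGroup α) (t : List (α × Bool))
    (h : g.toWord = (a, !b) :: t) :
    (FreeGroup.mk [(a, b)] * g).toWord = t := by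
  rw [mk_single_mul_toWord', h]
  simp

end PingPongAux

namespace PingPongAux
variable {α : Type*} [DecidableEq α]

/-- Prepending a run of `k` copies of a letter with no cancellation. -/
lemma pow_mul_toWord (a : α) (b : Bool) (k : ℕ) (g : FreeGroup α)
    (h : g.toWord.head? ≠ some (a, !b)) :
    ((FreeGroup.mk [(a, b)]) ^ k * g).toWord = List.replicate k (a, b) ++ g.toWord := by
  induction k with
  | zero => simp
  | succ k ih =>
    rw [pow_succ', mul_assoc]
    rw [single_mul_toWord a b _ ?_, ih, List.replicate_succ, List.cons_append]
    rw [ih]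
    cases k with
    | zero => simpa using h
    | succ k => simp [List.replicate_succ]

/-- Cancelling a run of `k` copies of a letter. -/
lemma pow_mul_toWord_cancel (a : α) (b : Bool) (k : ℕ) (g : FreeGroup α)
    (R : List (α × Bool)) (h : g.toWord = List.replicate k (a, !b) ++ R) :
    ((FreeGroup.mk [(a, b)]) ^ k * g).toWord = R := by
  induction k generalizing g with
  | zero => simpa using h
  | succ k ih =>
    rw [pow_succ, mul_assoc]
    apply ih
    apply single_mul_toWord_cancel
    rw [h, List.replicate_succ]
    rfl

end PingPongAux

namespace PingPongAux

lemma of_eq_mk {α : Type*} (a : α) : FreeGroup.of a = FreeGroup.mk [(a, true)] := rfl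

lemma inv_of_eq_mk {α : Type*} (a : α) : (FreeGroup.of a)⁻¹ = FreeGroup.mk [(a, false)] := by
  rw [of_eq_mk, FreeGroup.inv_mk]; rfl

lemma inv_pow_of_eq_mk {α : Type*} (a : α) (i : ℕ) :
    ((FreeGroup.of a) ^ i)⁻¹ = (FreeGroup.mk [(a, false)]) ^ i := by
  rw [← inv_pow, inv_of_eq_mk]

abbrev yn : Fin 2 × Bool := ((1 : Fin 2), false)

/-- decomposition of a word into its maximal leading run of `y⁻¹`'s -/
lemma run_decomp (L : List (Fin 2 × Bool)) :
    ∃ (k : ℕ) (R : List (Fin 2 × Bool)), L = List.replicate k yn ++ R ∧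
      R.head? ≠ some yn := by
  refine ⟨(L.takeWhile (· == yn)).length, L.dropWhile (· == yn), ?_, ?_⟩
  · conv_lhs => rw [← List.takeWhile_append_dropWhile (p := (· == yn)) (l := L)]
    congr 1
    apply List.eq_replicate_of_mem
    intro b hb
    simpa using List.mem_takeWhile_imp hb
  · intro hc
    have := List.head?_dropWhile_not (· == yn) L
    rw [hc] at this
    simpa using this

lemma key_head (i : ℕ) (hi : 1 ≤ i) (g : FreeGroup (Fin 2)) (c : Bool)
    (hg : ¬ (List.replicate i yn ++ [((0 : Fin 2), c)]) <+: g.toWord) :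
    (((FreeGroup.of (1 : Fin 2)) ^ i * g).toWord).head? ≠ some ((0 : Fin 2), c) := by
  obtain ⟨k, R, hsplit, hR⟩ := run_decomp g.toWord
  rcases lt_or_ge k i with hki | hki
  · -- k < i : result is y⁺^(i-k) ++ R
    have hik : i - k + k = i := Nat.sub_add_cancel hki.le
    have h1 : ((FreeGroup.of (1 : Fin 2)) ^ k * g).toWord = R := by
      rw [of_eq_mk]
      exact pow_mul_toWord_cancel (1 : Fin 2) true k g R (by simpa using hsplit)
    have h2 : ((FreeGroup.of (1 : Fin 2)) ^ i * g).toWord =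
        List.replicate (i - k) ((1 : Fin 2), true) ++ R := by
      have hpow : (FreeGroup.of (1 : Fin 2)) ^ i =
          (FreeGroup.of (1 : Fin 2)) ^ (i - k) * (FreeGroup.of (1 : Fin 2)) ^ k := by
        rw [← pow_add, hik]
      rw [hpow, mul_assoc, of_eq_mk, ← h1]
      refine pow_mul_toWord (1 : Fin 2) true (i - k) _ ?_
      rw [← of_eq_mk, h1]
      simpa using hR
    rw [h2]
    obtain ⟨m, hm⟩ : ∃ m, i - k = m + 1 := ⟨i - k - 1, by omega⟩
    rw [hm, List.replicate_succ]
    simp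
  · -- k ≥ i
    have hsplit' : g.toWord = List.replicate i yn ++ (List.replicate (k - i) yn ++ R) := by
      rw [hsplit, ← List.append_assoc, ← List.replicate_add]
      congr 2
      omega
    have h1 : ((FreeGroup.of (1 : Fin 2)) ^ i * g).toWord =
        List.replicate (k - i) yn ++ R := by
      rw [of_eq_mk]
      exact pow_mul_toWord_cancel (1 : Fin 2) true i g _ (by simpa using hsplit')
    rw [h1]
    rcases Nat.eq_or_lt_of_le hki with heq | hlt
    · -- k = i : word is R, use hg
      rw [heq, Nat.sub_self, List.replicate_zero, List.nil_append]
      intro hc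
      apply hg
      obtain ⟨R', hR'⟩ : ∃ R', R = ((0 : Fin 2), c) :: R' := by
        cases hRw : R with
        | nil => rw [hRw] at hc; simp at hc
        | cons hd tl => rw [hRw] at hc; simp at hc; exact ⟨tl, by rw [hc]⟩
      rw [hsplit', heq, Nat.sub_self, List.replicate_zero, List.nil_append, hR']
      exact ⟨R', by simp⟩
    · obtain ⟨m, hm⟩ : ∃ m, k - i = m + 1 := ⟨k - i - 1, by omega⟩
      rw [hm, List.replicate_succ]
      simp [yn]

end PingPongAux

namespace PingPongAux

/-- The generator elements. -/
noncomputable def A (i : ℕ) : FreeGroup (Fin 2) :=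
  (FreeGroup.of 0)⁻¹ * ((FreeGroup.of (1 : Fin 2)) ^ i)⁻¹ *
    FreeGroup.of 0 * (FreeGroup.of (1 : Fin 2)) ^ i

lemma main_X (i : ℕ) (hi : 1 ≤ i) (w : FreeGroup (Fin 2))
    (hw : ¬ (List.replicate i yn ++ [((0 : Fin 2), false)]) <+: w.toWord) :
    ∃ S, (A i * w).toWord =
      ((0 : Fin 2), false) :: (List.replicate i yn ++ ((0 : Fin 2), true) :: S) := by
  have key := key_head i hi w false hw
  -- w2 = of 0 * ((of 1)^i * w)
  have h2 : (FreeGroup.of (0 : Fin 2) * ((FreeGroup.of (1 : Fin 2)) ^ i * w)).toWord =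
      ((0 : Fin 2), true) :: ((FreeGroup.of (1 : Fin 2)) ^ i * w).toWord := by
    rw [of_eq_mk (0 : Fin 2)]
    exact single_mul_toWord 0 true _ (by simpa using key)
  have h3 : (((FreeGroup.of (1 : Fin 2)) ^ i)⁻¹ *
      (FreeGroup.of (0 : Fin 2) * ((FreeGroup.of (1 : Fin 2)) ^ i * w))).toWord =
      List.replicate i yn ++ ((0 : Fin 2), true) ::
        ((FreeGroup.of (1 : Fin 2)) ^ i * w).toWord := by
    rw [inv_pow_of_eq_mk]
    refine pow_mul_toWord (1 : Fin 2) false i _ ?_ |>.trans ?_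
    · rw [h2]; simp
    · rw [h2]
  refine ⟨((FreeGroup.of (1 : Fin 2)) ^ i * w).toWord, ?_⟩
  have hassoc : A i * w = (FreeGroup.of (0 : Fin 2))⁻¹ * (((FreeGroup.of (1 : Fin 2)) ^ i)⁻¹ *
      (FreeGroup.of (0 : Fin 2) * ((FreeGroup.of (1 : Fin 2)) ^ i * w))) := by
    rw [A]; group
  rw [hassoc, inv_of_eq_mk]
  refine (single_mul_toWord 0 false _ ?_).trans ?_
  · rw [h3]
    obtain ⟨m, hm⟩ : ∃ m, i = m + 1 := ⟨i - 1, by omega⟩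
    rw [hm, List.replicate_succ]
    simp [yn]
  · rw [h3]

lemma main_Y (i : ℕ) (hi : 1 ≤ i) (w : FreeGroup (Fin 2))
    (hw : ¬ (((0 : Fin 2), false) :: (List.replicate i yn ++ [((0 : Fin 2), true)])) <+: w.toWord) :
    ∃ S, ((A i)⁻¹ * w).toWord = List.replicate i yn ++ ((0 : Fin 2), false) :: S := by
  -- w1 = of 0 * w
  have hw1 : ¬ (List.replicate i yn ++ [((0 : Fin 2), true)]) <+:
      (FreeGroup.of (0 : Fin 2) * w).toWord := by
    cases hhead : w.toWord.head? with
    | none =>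
      have hnil : w.toWord = [] := by cases hx : w.toWord <;> simp [hx] at hhead ⊢
      have : (FreeGroup.of (0 : Fin 2) * w).toWord = [((0 : Fin 2), true)] := by
        rw [of_eq_mk]
        refine (single_mul_toWord 0 true w (by rw [hnil]; simp)).trans (by rw [hnil])
      rw [this]
      intro hpre
      obtain ⟨t, ht⟩ := hpre
      obtain ⟨m, hm⟩ : ∃ m, i = m + 1 := ⟨i - 1, by omega⟩
      rw [hm, List.replicate_succ] at ht
      simp [yn] at ht
    | some hd =>
      obtain ⟨T, hT⟩ : ∃ T, w.toWord = hd :: T := by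
        cases hx : w.toWord <;> simp [hx] at hhead ⊢; exact hhead
      by_cases hhd : hd = ((0 : Fin 2), false)
      · have h1 : (FreeGroup.of (0 : Fin 2) * w).toWord = T := by
          rw [of_eq_mk]
          exact single_mul_toWord_cancel 0 true w T (by rw [hT, hhd]; rfl)
        rw [h1]
        intro hpre
        apply hw
        rw [hT, hhd]
        exact List.cons_prefix_cons.mpr ⟨rfl, hpre⟩
      · have h1 : (FreeGroup.of (0 : Fin 2) * w).toWord = ((0 : Fin 2), true) :: w.toWord := by
          rw [of_eq_mk]
          refine single_mul_toWord 0 true w ?_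
          rw [hT]
          simpa using hhd
        rw [h1]
        intro hpre
        obtain ⟨t, ht⟩ := hpre
        obtain ⟨m, hm⟩ : ∃ m, i = m + 1 := ⟨i - 1, by omega⟩
        rw [hm, List.replicate_succ] at ht
        simp [yn] at ht
  have key := key_head i hi (FreeGroup.of (0 : Fin 2) * w) true hw1
  -- w3 = (of 0)⁻¹ * w2
  have h3 : ((FreeGroup.of (0 : Fin 2))⁻¹ *
      ((FreeGroup.of (1 : Fin 2)) ^ i * (FreeGroup.of (0 : Fin 2) * w))).toWord =
      ((0 : Fin 2), false) ::
        ((FreeGroup.of (1 : Fin 2)) ^ i * (FreeGroup.of (0 : Fin 2) * w)).toWord := by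
    rw [inv_of_eq_mk]
    exact single_mul_toWord 0 false _ (by simpa using key)
  refine ⟨((FreeGroup.of (1 : Fin 2)) ^ i * (FreeGroup.of (0 : Fin 2) * w)).toWord, ?_⟩
  have hassoc : (A i)⁻¹ * w = ((FreeGroup.of (1 : Fin 2)) ^ i)⁻¹ *
      ((FreeGroup.of (0 : Fin 2))⁻¹ *
        ((FreeGroup.of (1 : Fin 2)) ^ i * (FreeGroup.of (0 : Fin 2) * w))) := by
    rw [A]; group
  rw [hassoc, inv_pow_of_eq_mk]
  refine (pow_mul_toWord (1 : Fin 2) false i _ ?_).trans ?_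
  · rw [h3]; simp
  · rw [h3]

end PingPongAux

namespace PingPongAux

lemma prefix_clash (c : Bool) (i i' : ℕ) (hii : i < i') (L : List (Fin 2 × Bool))
    (h1 : (List.replicate i yn ++ [((0 : Fin 2), c)]) <+: L)
    (h2 : (List.replicate i' yn ++ [((0 : Fin 2), c)]) <+: L) : False := by
  have l1 : i < (List.replicate i yn ++ [((0 : Fin 2), c)]).length := by simp
  have l2 : i < (List.replicate i' yn ++ [((0 : Fin 2), c)]).length := by simp; omega
  have e1 := h1.getElem l1
  have e2 := h2.getElem l2
  have e3 := e1.trans e2.symm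
  rw [List.getElem_append_right (by simp)] at e3
  rw [List.getElem_append_left (by simpa using hii)] at e3
  simp [yn] at e3

/-- the ping-pong X sets -/
def Xset (i : ℕ) : Set (FreeGroup (Fin 2)) :=
  {w | (((0 : Fin 2), false) :: (List.replicate i yn ++ [((0 : Fin 2), true)])) <+: w.toWord}

/-- the ping-pong Y sets -/
def Yset (i : ℕ) : Set (FreeGroup (Fin 2)) :=
  {w | (List.replicate i yn ++ [((0 : Fin 2), false)]) <+: w.toWord}

lemma lift_injective (m : ℕ) (hm : 2 ≤ m) :
    Function.Injective (FreeGroup.lift (fun j : Fin m => A (j.val + 1))) := by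
  haveI : Nontrivial (Fin m) := Fin.nontrivial_iff_two_le.mpr hm
  apply FreeGroup.injective_lift_of_ping_pong _ (fun j : Fin m => Xset (j.val + 1))
    (fun j : Fin m => Yset (j.val + 1))
  · -- nonempty
    intro j
    refine ⟨A (j.val + 1), ?_⟩
    obtain ⟨S, hS⟩ := main_X (j.val + 1) (by omega) 1 (by simp)
    rw [mul_one] at hS
    exact ⟨S, by rw [hS]; simp⟩
  · -- X disjoint
    intro j j' hjj
    rw [Function.onFun, Set.disjoint_left]
    intro w h1 h2
    rw [Xset, Set.mem_setOf_eq] at h1 h2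
    cases hx : w.toWord with
    | nil => rw [hx] at h1; simp at h1
    | cons hd T =>
      rw [hx] at h1 h2
      rcases List.cons_prefix_cons.mp h1 with ⟨-, q1⟩
      rcases List.cons_prefix_cons.mp h2 with ⟨-, q2⟩
      have hne : (j.val : ℕ) ≠ j'.val := fun hc => hjj (Fin.ext hc)
      rcases lt_or_gt_of_ne hne with hlt | hgt
      · exact prefix_clash true _ _ (by omega) T q1 q2
      · exact prefix_clash true _ _ (by omega) T q2 q1
  · -- Y disjoint
    intro j j' hjj
    rw [Function.onFun, Set.disjoint_left]
    intro w h1 h2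
    rw [Yset, Set.mem_setOf_eq] at h1 h2
    have hne : (j.val : ℕ) ≠ j'.val := fun hc => hjj (Fin.ext hc)
    rcases lt_or_gt_of_ne hne with hlt | hgt
    · exact prefix_clash false _ _ (by omega) _ h1 h2
    · exact prefix_clash false _ _ (by omega) _ h2 h1
  · -- X/Y disjoint
    intro j j'
    rw [Set.disjoint_left]
    intro w h1 h2
    rw [Xset, Set.mem_setOf_eq] at h1
    rw [Yset, Set.mem_setOf_eq] at h2
    have l1 : 0 < (((0 : Fin 2), false) ::
        (List.replicate (j.val + 1) yn ++ [((0 : Fin 2), true)])).length := by simp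
    have l2 : 0 < (List.replicate (j'.val + 1) yn ++ [((0 : Fin 2), false)]).length := by simp
    have e1 := h1.getElem l1
    have e2 := h2.getElem l2
    rw [← e1] at e2
    rw [List.getElem_append_left (by simp)] at e2
    simp [yn] at e2
  · -- ping X
    intro j w hw
    rw [Set.mem_smul_set] at hw
    obtain ⟨u, hu, rfl⟩ := hw
    rw [Set.mem_compl_iff, Yset, Set.mem_setOf_eq] at hu
    obtain ⟨S, hS⟩ := main_X (j.val + 1) (by omega) u hu
    rw [smul_eq_mul]
    exact ⟨S, by rw [hS]; simp⟩
  · -- ping Y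
    intro j w hw
    rw [Set.mem_smul_set] at hw
    obtain ⟨u, hu, rfl⟩ := hw
    rw [Set.mem_compl_iff, Xset, Set.mem_setOf_eq] at hu
    obtain ⟨S, hS⟩ := main_Y (j.val + 1) (by omega) u hu
    rw [Pi.inv_apply, smul_eq_mul]
    exact ⟨S, by rw [hS]; simp⟩

end PingPongAux

/-- For `n ≥ 1`, the homomorphism `φ` from the free group on generators `x₁, …, xₙ`
(indexed by `Fin n`, with `x_{i+1} = FreeGroup.of i`) to the free group on two
generators `x = FreeGroup.of 0`, `y = FreeGroup.of 1` determined by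
`φ(x_i) = [x, yⁱ] = x⁻¹y⁻ⁱxyⁱ` for `1 ≤ i ≤ n` is injective. -/
theorem embed_free_group_injective (n : ℕ) (hn : 1 ≤ n)
    (φ : FreeGroup (Fin n) →* FreeGroup (Fin 2))
    (h : ∀ i : Fin n, φ (FreeGroup.of i) =
      (FreeGroup.of 0)⁻¹ * ((FreeGroup.of (1 : Fin 2)) ^ (i.val + 1))⁻¹ *
        FreeGroup.of 0 * (FreeGroup.of (1 : Fin 2)) ^ (i.val + 1)) :
    Function.Injective φ := by
  classical
  set m := max n 2 with hm
  have hnm : n ≤ m := le_max_left n 2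
  have h2m : 2 ≤ m := le_max_right n 2
  have hφ : φ = (FreeGroup.lift (fun j : Fin m => PingPongAux.A (j.val + 1))).comp
      (FreeGroup.map (Fin.castLE hnm)) := by
    apply FreeGroup.ext_hom
    intro i
    rw [h i, MonoidHom.comp_apply, FreeGroup.map.of, FreeGroup.lift_apply_of]
    simp [PingPongAux.A, Fin.coe_castLE]
  rw [hφ, MonoidHom.coe_comp]
  apply Function.Injective.comp (PingPongAux.lift_injective m h2m)
  -- injectivity of FreeGroup.map of castLE, via a left inverse
  have hleft : Function.LeftInverse
      (FreeGroup.map (fun j : Fin m => if hj : (j : ℕ) < n then (⟨j, hj⟩ : Fin n) else ⟨0, hn⟩))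
      (FreeGroup.map (Fin.castLE hnm)) := by
    intro x
    rw [FreeGroup.map.comp]
    have hcomp : ((fun j : Fin m => if hj : (j : ℕ) < n then (⟨j, hj⟩ : Fin n) else ⟨0, hn⟩)
        ∘ (Fin.castLE hnm)) = id := by
      funext i
      simp [Fin.castLE]
    rw [hcomp, FreeGroup.map.id]
  exact hleft.injective
end
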